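/- arXiv:2603.21711 — 5 statements merged into one kernel-verified Lean document; each statement's English description precedes it below -/
import Mathlib

section
/- Let A be a closable linear operator on a complex Banach space X satisfying the hypothesis D(A) ⊆ R(zI−A) for all z ∈ ρ(A). Then for all z₁, z₂ ∈ ρ(A): R(z₁I−A) = R(z₂I−A), and the resolvent identity R(z₁,A) − R(z₂,A) = (z₂ − z₁) R(z₁,A) R(z₂,A) holds on this common range. -/
open scoped Classical Topology
open Filter Asymptotics

namespace CharOp

variable {X Y : Type*} [NormedAddCommGroup X] [NormedSpace ℂ X]
  [NormedAddCommGroup Y] [NormedSpace ℂ Y]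

def kerSet (A : X →ₗ.[ℂ] Y) : Set X := {x | ∃ hx : x ∈ A.domain, A ⟨x, hx⟩ = 0}

def ranSet (A : X →ₗ.[ℂ] Y) : Set Y := Set.range fun x : A.domain => A x

def shiftApply (A : X →ₗ.[ℂ] X) (z : ℂ) (x : A.domain) : X := z • (x : X) - A x

def resolventSet (A : X →ₗ.[ℂ] X) : Set ℂ :=
  {z | Function.Injective (shiftApply A z) ∧ Dense (Set.range (shiftApply A z)) ∧
    ∃ C : ℝ, 0 ≤ C ∧ ∀ x : A.domain, ‖(x : X)‖ ≤ C * ‖shiftApply A z x‖}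

def spectrumSet (A : X →ₗ.[ℂ] X) : Set ℂ := (resolventSet A)ᶜ

def pointSpectrum (A : X →ₗ.[ℂ] X) : Set ℂ :=
  {σ | ∃ x : A.domain, (x : X) ≠ 0 ∧ A x = σ • (x : X)}

def SH1 (A : X →ₗ.[ℂ] X) : Prop :=
  ∀ z ∈ resolventSet A, (A.domain : Set X) ⊆ Set.range (shiftApply A z)

def eigSet (A : X →ₗ.[ℂ] X) (σ : ℂ) : Set X :=
  {x | ∃ hx : x ∈ A.domain, A ⟨x, hx⟩ = σ • x}

def IsPreChain (A : X →ₗ.[ℂ] X) (σ : ℂ) (k : ℕ) (φ : Fin k → A.domain) : Prop :=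
  ∀ i : Fin k, A (φ i) - σ • ((φ i : X)) =
    if 0 < (i : ℕ) then
      ((φ ⟨(i : ℕ) - 1, lt_of_le_of_lt (Nat.sub_le _ _) i.isLt⟩ : X)) else 0

def IsJordanChain (A : X →ₗ.[ℂ] X) (σ : ℂ) (k : ℕ) (φ : Fin k → A.domain) : Prop :=
  IsPreChain A σ k φ ∧ ∃ hk : 0 < k, ((φ ⟨0, hk⟩ : X)) ≠ 0

def genEigSet (A : X →ₗ.[ℂ] X) (σ : ℂ) : Set X :=
  {x | ∃ (k : ℕ) (hk : 0 < k) (φ : Fin k → A.domain),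
      IsPreChain A σ k φ ∧ ((φ ⟨k - 1, Nat.sub_lt hk Nat.one_pos⟩ : X)) = x}

noncomputable def geomMult (A : X →ₗ.[ℂ] X) (σ : ℂ) : Cardinal :=
  Module.rank ℂ (Submodule.span ℂ (eigSet A σ))

noncomputable def algMult (A : X →ₗ.[ℂ] X) (σ : ℂ) : Cardinal :=
  Module.rank ℂ ((Submodule.span ℂ (genEigSet A σ)).topologicalClosure)

noncomputable def ascent (A : X →ₗ.[ℂ] X) (σ : ℂ) : ℕ∞ :=
  sSup {m : ℕ∞ | ∃ (k : ℕ) (φ : Fin k → A.domain), IsJordanChain A σ k φ ∧ m = (k : ℕ∞)}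

noncomputable def res (A : X →ₗ.[ℂ] X) (z : ℂ) (y : X) : X :=
  if hy : ∃ x : A.domain, shiftApply A z x = y then ((hy.choose : X)) else 0

noncomputable def laurentCoeff (A : X →ₗ.[ℂ] X) (σ : ℂ) (r : ℝ) (l : ℤ) (v : X) : X :=
  (2 * Real.pi * Complex.I)⁻¹ • ∮ z in C(σ, r), (z - σ) ^ (-(l + 1)) • res A z v

def coeffVanishes (A : X →ₗ.[ℂ] X) (σ : ℂ) (r : ℝ) (m : ℕ) : Prop :=
  ∀ z ∈ resolventSet A, ∀ v ∈ Set.range (shiftApply A z),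
    laurentCoeff A σ r (-(m : ℤ)) v = 0

noncomputable def poleOrder (A : X →ₗ.[ℂ] X) (σ : ℂ) (r : ℝ) : ℕ∞ :=
  if hA : ∃ m : ℕ, ¬ coeffVanishes A σ r m ∧ ∀ l : ℕ, m < l → coeffVanishes A σ r l
  then (hA.choose : ℕ∞) else ⊤



lemma range_mono_aux {X : Type*} [NormedAddCommGroup X] [NormedSpace ℂ X]
    (A : X →ₗ.[ℂ] X) (h1 : SH1 A) {z₁ : ℂ} (hz₁ : z₁ ∈ resolventSet A) (z₂ : ℂ) :
    Set.range (shiftApply A z₂) ⊆ Set.range (shiftApply A z₁) := by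
  rintro y ⟨x, rfl⟩
  obtain ⟨w, hw⟩ := h1 z₁ hz₁ x.2
  refine ⟨x + (z₂ - z₁) • w, ?_⟩
  simp only [shiftApply, Submodule.coe_add, Submodule.coe_smul, LinearPMap.map_add, LinearPMap.map_smul] at hw ⊢
  linear_combination (norm := module) (z₂ - z₁) • hw

theorem statement6 {X : Type*} [NormedAddCommGroup X] [NormedSpace ℂ X] [CompleteSpace X]
    (A : X →ₗ.[ℂ] X) (hA : A.IsClosable) (h1 : SH1 A) :
    ∀ z₁ ∈ resolventSet A, ∀ z₂ ∈ resolventSet A,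
      Set.range (shiftApply A z₁) = Set.range (shiftApply A z₂) ∧
      ∀ x₁ x₂ : A.domain, shiftApply A z₁ x₁ = shiftApply A z₂ x₂ →
        ∃ w : A.domain, shiftApply A z₁ w = (x₂ : X) ∧
          (x₁ : X) - (x₂ : X) = (z₂ - z₁) • (w : X) := by
  intro z₁ hz₁ z₂ hz₂
  refine ⟨Set.Subset.antisymm (range_mono_aux A h1 hz₂ z₁) (range_mono_aux A h1 hz₁ z₂), ?_⟩
  intro x₁ x₂ hx
  obtain ⟨w, hw⟩ := h1 z₁ hz₁ x₂.2
  refine ⟨w, hw, ?_⟩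
  have key : shiftApply A z₁ x₁ = shiftApply A z₁ (x₂ + (z₂ - z₁) • w) := by
    rw [hx]
    simp only [shiftApply, Submodule.coe_add, Submodule.coe_smul, LinearPMap.map_add, LinearPMap.map_smul] at hw ⊢
    linear_combination (norm := module) (z₁ - z₂) • hw
  have h2 := hz₁.1 key
  have h3 : (x₁ : X) = (x₂ : X) + (z₂ - z₁) • (w : X) := by
    rw [h2]; simp
  rw [h3]; abel


end CharOp
end

section
/- Let A be a closable linear operator on a complex Banach space X satisfying (SH1), let σ be an isolated point of σ(A), and let P_σ(A) := R_{−1}(σ,A) be the residue of the resolvent at σ. Then X = closure(R(P_σ(A))) ⊕ closure(R(I − P_σ(A))), and closure(N(P_σ(A))) ⊆ closure(R(I − P_σ(A))). -/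
open scoped Classical Topology
open Filter Asymptotics

namespace CharOp

variable {X Y : Type*} [NormedAddCommGroup X] [NormedSpace ℂ X]
  [NormedAddCommGroup Y] [NormedSpace ℂ Y]

section RieszAux

open Metric
open scoped ENNReal NNReal

set_option linter.unusedSectionVars false
set_option linter.unusedVariables false

variable [CompleteSpace X]

noncomputable def shiftL (A : X →ₗ.[ℂ] X) (z : ℂ) : A.domain →ₗ[ℂ] X :=
  z • A.domain.subtype - A.toFun

lemma shiftL_coe (A : X →ₗ.[ℂ] X) (z : ℂ) : ⇑(shiftL A z) = shiftApply A z := rfl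


noncomputable def invL (A : X →ₗ.[ℂ] X) (z : ℂ) (hz : z ∈ resolventSet A) :
    ↥(LinearMap.range (shiftL A z)) →ₗ[ℂ] X :=
  A.domain.subtype ∘ₗ
    ((LinearEquiv.ofInjective (shiftL A z) (by rw [shiftL_coe]; exact hz.1)).symm :
      ↥(LinearMap.range (shiftL A z)) →ₗ[ℂ] A.domain)

lemma shift_invL (A : X →ₗ.[ℂ] X) (z : ℂ) (hz : z ∈ resolventSet A)
    (v : ↥(LinearMap.range (shiftL A z))) :
    shiftL A z ⟨invL A z hz v, ((LinearEquiv.ofInjective (shiftL A z)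
      (by rw [shiftL_coe]; exact hz.1)).symm v).2⟩ = (v : X) := by
  set e := LinearEquiv.ofInjective (shiftL A z) (by rw [shiftL_coe]; exact hz.1)
  have h1 : (⟨invL A z hz v, (e.symm v).2⟩ : A.domain) = e.symm v := rfl
  rw [h1]
  have := congrArg (Subtype.val) (e.apply_symm_apply v)
  rwa [LinearEquiv.ofInjective_apply] at this

lemma invL_bound (A : X →ₗ.[ℂ] X) (z : ℂ) (hz : z ∈ resolventSet A)
    (v : ↥(LinearMap.range (shiftL A z))) :
    ‖invL A z hz v‖ ≤ hz.2.2.choose * ‖v‖ := by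
  obtain ⟨hC0, hC⟩ := hz.2.2.choose_spec
  have h2 : shiftApply A z ⟨invL A z hz v, ((LinearEquiv.ofInjective (shiftL A z)
      (by rw [shiftL_coe]; exact hz.1)).symm v).2⟩ = (v : X) := shift_invL A z hz v
  have h3 := hC ⟨invL A z hz v, ((LinearEquiv.ofInjective (shiftL A z)
      (by rw [shiftL_coe]; exact hz.1)).symm v).2⟩
  rw [h2] at h3
  exact h3

open Classical in
noncomputable def ropAux (A : X →ₗ.[ℂ] X) (z : ℂ) (hz : z ∈ resolventSet A) : X →L[ℂ] X :=
  ContinuousLinearMap.extend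
    (LinearMap.mkContinuous (invL A z hz) hz.2.2.choose (invL_bound A z hz))
    (LinearMap.range (shiftL A z)).subtypeL

open Classical in
noncomputable def rop (A : X →ₗ.[ℂ] X) (z : ℂ) : X →L[ℂ] X :=
  if hz : z ∈ resolventSet A then ropAux A z hz else 0

lemma rop_shift (A : X →ₗ.[ℂ] X) {z : ℂ} (hz : z ∈ resolventSet A) (x : A.domain) :
    rop A z (shiftApply A z x) = x := by
  classical
  rw [rop]
  rw [dif_pos hz, ropAux]
  have hmem : shiftApply A z x ∈ LinearMap.range (shiftL A z) := by
    rw [← shiftL_coe]; exact LinearMap.mem_range_self _ x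
  have h1 : shiftApply A z x =
      (LinearMap.range (shiftL A z)).subtypeL ⟨shiftApply A z x, hmem⟩ := rfl
  have hden : DenseRange (LinearMap.range (shiftL A z)).subtypeL := by
    have hd : Dense ((LinearMap.range (shiftL A z) : Submodule ℂ X) : Set X) := by
      rw [LinearMap.coe_range, shiftL_coe]; exact hz.2.1
    simpa [DenseRange, Submodule.subtypeL, Set.range] using hd.denseRange_val
  rw [h1, ContinuousLinearMap.extend_eq (h_dense := hden)
    (h_e := isUniformEmbedding_subtype_val.isUniformInducing)]
  show invL A z hz ⟨shiftApply A z x, hmem⟩ = x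
  set e := LinearEquiv.ofInjective (shiftL A z) (by rw [shiftL_coe]; exact hz.1) with he
  show ((e.symm ⟨shiftApply A z x, hmem⟩ : A.domain) : X) = (x : X)
  have h4 : (⟨shiftApply A z x, hmem⟩ : ↥(LinearMap.range (shiftL A z))) = e x := by
    ext; rw [LinearEquiv.ofInjective_apply, shiftL_coe]
  rw [h4, LinearEquiv.symm_apply_apply]

lemma shift_sub (A : X →ₗ.[ℂ] X) (z w : ℂ) (x : A.domain) :
    shiftApply A z x - shiftApply A w x = (z - w) • (x : X) := by
  simp [shiftApply, sub_smul]

lemma resolvent_id (A : X →ₗ.[ℂ] X) {z w : ℂ} (hz : z ∈ resolventSet A)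
    (hw : w ∈ resolventSet A) :
    rop A z - rop A w = (w - z) • (rop A z ∘L rop A w) := by
  apply ContinuousLinearMap.coeFn_injective
  have hdense : Dense (Set.range (shiftApply A w)) := hw.2.1
  apply Continuous.ext_on hdense (rop A z - rop A w).continuous
    ((w - z) • (rop A z ∘L rop A w)).continuous
  rintro v ⟨x, rfl⟩
  have hv : shiftApply A w x = shiftApply A z x - (z - w) • (x : X) := by
    rw [← shift_sub A z w x]; abel
  simp only [ContinuousLinearMap.sub_apply, ContinuousLinearMap.smul_apply,
    ContinuousLinearMap.comp_apply]
  rw [rop_shift A hw x, hv, map_sub, map_smul, rop_shift A hz x]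
  module

lemma rop_norm_locbound (A : X →ₗ.[ℂ] X) {z₁ w : ℂ} (hz₁ : z₁ ∈ resolventSet A)
    (hw : w ∈ resolventSet A) (hd : ‖rop A z₁‖ * ‖w - z₁‖ ≤ 1 / 2) :
    ‖rop A w‖ ≤ 2 * ‖rop A z₁‖ := by
  have hid := resolvent_id A hw hz₁
  have h1 : ‖rop A w - rop A z₁‖ ≤ ‖w - z₁‖ * (‖rop A w‖ * ‖rop A z₁‖) := by
    rw [hid]
    have hs := norm_smul_le (z₁ - w) ((rop A w).comp (rop A z₁))
    have := ContinuousLinearMap.opNorm_comp_le (rop A w) (rop A z₁)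
    have h2 : ‖z₁ - w‖ = ‖w - z₁‖ := norm_sub_rev _ _
    calc ‖(z₁ - w) • (rop A w).comp (rop A z₁)‖ ≤ ‖z₁ - w‖ * ‖(rop A w).comp (rop A z₁)‖ := hs
      _ ≤ ‖z₁ - w‖ * (‖rop A w‖ * ‖rop A z₁‖) :=
          mul_le_mul_of_nonneg_left this (norm_nonneg _)
      _ = ‖w - z₁‖ * (‖rop A w‖ * ‖rop A z₁‖) := by rw [h2]
  have h3 : ‖rop A w‖ ≤ ‖rop A z₁‖ + ‖rop A w - rop A z₁‖ := by
    have := norm_sub_norm_le (rop A w) (rop A z₁)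
    linarith [norm_nonneg (rop A w - rop A z₁)]
  have h4 : ‖w - z₁‖ * (‖rop A w‖ * ‖rop A z₁‖) ≤ (1 / 2) * ‖rop A w‖ := by
    have := mul_le_mul_of_nonneg_left hd (norm_nonneg (rop A w))
    nlinarith [norm_nonneg (rop A w), norm_nonneg (rop A z₁), norm_nonneg (w - z₁)]
  linarith

lemma rop_lip (A : X →ₗ.[ℂ] X) {z₁ w : ℂ} (hz₁ : z₁ ∈ resolventSet A)
    (hw : w ∈ resolventSet A) (hd : ‖rop A z₁‖ * ‖w - z₁‖ ≤ 1 / 2) :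
    ‖rop A w - rop A z₁‖ ≤ 2 * ‖rop A z₁‖ ^ 2 * ‖w - z₁‖ := by
  have hid := resolvent_id A hw hz₁
  have hb := rop_norm_locbound A hz₁ hw hd
  rw [hid]
  have hs := norm_smul_le (z₁ - w) ((rop A w).comp (rop A z₁))
  have h2 : ‖z₁ - w‖ = ‖w - z₁‖ := norm_sub_rev _ _
  have := ContinuousLinearMap.opNorm_comp_le (rop A w) (rop A z₁)
  calc ‖(z₁ - w) • (rop A w).comp (rop A z₁)‖ ≤ ‖z₁ - w‖ * ‖(rop A w).comp (rop A z₁)‖ := hs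
    _ ≤ ‖w - z₁‖ * (‖rop A w‖ * ‖rop A z₁‖) := by
        rw [h2] at *; exact mul_le_mul_of_nonneg_left this (norm_nonneg _)
    _ ≤ 2 * ‖rop A z₁‖ ^ 2 * ‖w - z₁‖ := by
        nlinarith [mul_le_mul_of_nonneg_left hb
          (mul_nonneg (norm_nonneg (w - z₁)) (norm_nonneg (rop A z₁))),
          norm_nonneg (w - z₁), norm_nonneg (rop A z₁)]

lemma rop_continuousAt (A : X →ₗ.[ℂ] X) {U : Set ℂ} (hU : IsOpen U)
    (hUρ : U ⊆ resolventSet A) {z₁ : ℂ} (hz₁ : z₁ ∈ U) :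
    ContinuousAt (rop A) z₁ := by
  obtain ⟨δ₀, hδ₀, hball⟩ := Metric.isOpen_iff.1 hU z₁ hz₁
  set M := ‖rop A z₁‖ with hM
  have hM0 : 0 ≤ M := norm_nonneg _
  set δ := min δ₀ ((1 / 2) / (M + 1)) with hδdef
  have hδpos : 0 < δ := lt_min hδ₀ (by positivity)
  have hz₁ρ : z₁ ∈ resolventSet A := hUρ hz₁
  have hsmall : ∀ w ∈ Metric.ball z₁ δ, w ∈ resolventSet A ∧ M * ‖w - z₁‖ ≤ 1 / 2 := by
    intro w hwb
    have hw1 : w ∈ Metric.ball z₁ δ₀ := Metric.ball_subset_ball (min_le_left _ _) hwb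
    have hwU : w ∈ U := hball hw1
    refine ⟨hUρ hwU, ?_⟩
    have hd : ‖w - z₁‖ < (1 / 2) / (M + 1) := by
      have := hwb
      rw [Metric.mem_ball, dist_eq_norm] at this
      exact lt_of_lt_of_le this (min_le_right _ _)
    have : M * ‖w - z₁‖ ≤ M * ((1 / 2) / (M + 1)) :=
      mul_le_mul_of_nonneg_left hd.le hM0
    have h3 : M * ((1 / 2) / (M + 1)) ≤ 1 / 2 := by
      rw [div_eq_mul_inv]
      have h4 : M * (1 / 2) * (M + 1)⁻¹ ≤ (M + 1) * (1 / 2) * (M + 1)⁻¹ := by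
        have : (0:ℝ) ≤ (M + 1)⁻¹ := by positivity
        nlinarith
      calc M * (1 / 2 * (M + 1)⁻¹) = M * (1 / 2) * (M + 1)⁻¹ := by ring
        _ ≤ (M + 1) * (1 / 2) * (M + 1)⁻¹ := h4
        _ = 1 / 2 * ((M + 1) * (M + 1)⁻¹) := by ring
        _ = 1 / 2 := by
            rw [mul_inv_cancel₀ (by positivity : (M:ℝ) + 1 ≠ 0), mul_one]
    linarith
  rw [Metric.continuousAt_iff]
  intro ε' hε'
  refine ⟨min δ (ε' / (2 * M ^ 2 + 1)), lt_min hδpos (by positivity), ?_⟩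
  intro w hwd
  have hwb : w ∈ Metric.ball z₁ δ := by
    rw [Metric.mem_ball]; exact lt_of_lt_of_le hwd (min_le_left _ _)
  obtain ⟨hwρ, hwsmall⟩ := hsmall w hwb
  have hlip := rop_lip A hz₁ρ hwρ hwsmall
  rw [dist_eq_norm] at hwd ⊢
  have h5 : ‖w - z₁‖ < ε' / (2 * M ^ 2 + 1) := lt_of_lt_of_le hwd (min_le_right _ _)
  calc ‖rop A w - rop A z₁‖ ≤ 2 * M ^ 2 * ‖w - z₁‖ := hlip
    _ ≤ (2 * M ^ 2 + 1) * ‖w - z₁‖ := by nlinarith [norm_nonneg (w - z₁)]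
    _ < (2 * M ^ 2 + 1) * (ε' / (2 * M ^ 2 + 1)) := by
        apply mul_lt_mul_of_pos_left h5 (by positivity)
    _ = ε' := by field_simp

lemma rop_hasDerivAt (A : X →ₗ.[ℂ] X) {U : Set ℂ} (hU : IsOpen U)
    (hUρ : U ⊆ resolventSet A) {z₁ : ℂ} (hz₁ : z₁ ∈ U) :
    HasDerivAt (rop A) (-(rop A z₁ ∘L rop A z₁)) z₁ := by
  rw [hasDerivAt_iff_tendsto_slope]
  have hz₁ρ : z₁ ∈ resolventSet A := hUρ hz₁
  have hev : ∀ᶠ w in 𝓝[≠] z₁, slope (rop A) z₁ w = -(rop A w ∘L rop A z₁) := by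
    have hUnh : U ∈ 𝓝[≠] z₁ := nhdsWithin_le_nhds (hU.mem_nhds hz₁)
    filter_upwards [hUnh, self_mem_nhdsWithin] with w hwU hwne
    have hwρ : w ∈ resolventSet A := hUρ hwU
    have hne : w - z₁ ≠ 0 := sub_ne_zero.2 hwne
    rw [slope_def_module]
    rw [resolvent_id A hwρ hz₁ρ, smul_smul]
    rw [show z₁ - w = -(w - z₁) by ring, mul_neg, inv_mul_cancel₀ hne]
    simp
  have hten : Filter.Tendsto (fun w => -(rop A w ∘L rop A z₁)) (𝓝[≠] z₁)
      (𝓝 (-(rop A z₁ ∘L rop A z₁))) := by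
    have hc : ContinuousAt (fun w => rop A w ∘L rop A z₁) z₁ := by
      exact ((ContinuousLinearMap.compL ℂ X X X).flip (rop A z₁)).continuous.continuousAt.comp
        (rop_continuousAt A hU hUρ hz₁)
    exact (hc.tendsto.mono_left nhdsWithin_le_nhds).neg
  exact hten.congr' (by filter_upwards [hev] with w h using h.symm)

lemma circleIntegral_CLM_comm {E F : Type*} [NormedAddCommGroup E] [NormedSpace ℂ E]
    [NormedAddCommGroup F] [NormedSpace ℂ F] [CompleteSpace E] [CompleteSpace F]
    (L : E →L[ℂ] F) {f : ℂ → E} {c : ℂ} {R : ℝ} (hf : CircleIntegrable f c R) :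
    (∮ z in C(c, R), L (f z)) = L (∮ z in C(c, R), f z) := by
  simp only [circleIntegral]
  rw [← L.intervalIntegral_comp_comm hf.out]
  congr 1
  ext θ
  rw [map_smul]

lemma rop_idem (A : X →ₗ.[ℂ] X) (σ : ℂ) {ε r : ℝ} (hε : 0 < ε)
    (hiso : ∀ w : ℂ, w ≠ σ → ‖w - σ‖ < ε → w ∈ resolventSet A)
    (hr : 0 < r) (hrε : r < ε) :
    ((2 * Real.pi * Complex.I : ℂ)⁻¹ • ∮ z in C(σ, r), rop A z) ∘L
      ((2 * Real.pi * Complex.I : ℂ)⁻¹ • ∮ z in C(σ, r), rop A z) =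
    (2 * Real.pi * Complex.I : ℂ)⁻¹ • ∮ z in C(σ, r), rop A z := by
  set R' : ℝ := (r + ε) / 2 with hR'def
  have hR'0 : 0 < R' := by positivity
  have hrR' : r < R' := by rw [hR'def]; linarith
  have hR'ε : R' < ε := by rw [hR'def]; linarith
  set U : Set ℂ := Metric.ball σ ε \ {σ} with hUdef
  have hU : IsOpen U := isOpen_ball.sdiff isClosed_singleton
  have hUρ : U ⊆ resolventSet A := by
    rintro w ⟨hw1, hw2⟩
    exact hiso w (by simpa using hw2) (by rw [← Complex.dist_eq]; exact mem_ball.mp hw1)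
  have hsphere : ∀ {r' : ℝ}, 0 < r' → r' < ε → sphere σ r' ⊆ U := by
    intro r' h1 h2 z hz
    rw [mem_sphere] at hz
    constructor
    · rw [mem_ball, hz]; exact h2
    · simp only [Set.mem_singleton_iff]
      intro hzσ
      rw [hzσ, dist_self] at hz
      exact absurd hz.symm (ne_of_gt h1)
  have hball_ann : Metric.ball σ R' \ closedBall σ r ⊆ U := by
    rintro z ⟨hz1, hz2⟩
    constructor
    · exact mem_ball.mpr (lt_trans (mem_ball.mp hz1) hR'ε)
    · simp only [Set.mem_singleton_iff]
      intro hzσ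
      apply hz2
      rw [hzσ]; exact mem_closedBall_self hr.le
  have hann : closedBall σ R' \ ball σ r ⊆ U := by
    rintro z ⟨hz1, hz2⟩
    constructor
    · exact mem_ball.mpr (lt_of_le_of_lt (mem_closedBall.mp hz1) hR'ε)
    · simp only [Set.mem_singleton_iff]
      intro hzσ
      apply hz2
      rw [hzσ]; exact mem_ball_self hr
  have hcontU : ∀ {s : Set ℂ}, s ⊆ U → ContinuousOn (rop A) s := fun hs =>
    fun z hz => (rop_continuousAt A hU hUρ (hs hz)).continuousWithinAt
  have hint : ∀ {r' : ℝ}, 0 < r' → r' < ε → CircleIntegrable (rop A) σ r' := by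
    intro r' h1 h2
    exact (hcontU (hsphere h1 h2)).circleIntegrable h1.le
  -- equality of the two circle integrals
  have hRr : (∮ z in C(σ, R'), rop A z) = ∮ z in C(σ, r), rop A z := by
    apply Complex.circleIntegral_eq_of_differentiable_on_annulus_off_countable hr hrR'.le
      Set.countable_empty (hcontU hann)
    intro z hz
    exact (rop_hasDerivAt A hU hUρ (hball_ann hz.1)).differentiableAt
  -- the Cauchy transform h
  set h : ℂ → (X →L[ℂ] X) := fun z => ∮ w in C(σ, R'), (w - z)⁻¹ • rop A w with hhdef
  have h2πi : (2 * Real.pi * Complex.I : ℂ) ≠ 0 := Complex.two_pi_I_ne_zero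
  have hdiff_h : ∀ z ∈ ball σ R', DifferentiableAt ℂ h z := by
    intro z hzb
    set R'' : NNReal := R'.toNNReal with hR''def
    have hcoe : (R'' : ℝ) = R' := Real.coe_toNNReal _ hR'0.le
    have hR''pos : 0 < R'' := by
      rw [← NNReal.coe_pos, hcoe]; exact hR'0
    have hfint : CircleIntegrable (rop A) σ (R'' : ℝ) := by rw [hcoe]; exact hint hR'0 hR'ε
    have hps := hasFPowerSeriesOn_cauchy_integral hfint hR''pos
    have hzb' : z ∈ Metric.eball σ (R'' : ℝ≥0∞) := by
      rw [Metric.emetric_ball_nnreal, hcoe]; exact hzb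
    have hg : DifferentiableAt ℂ
        (fun w => (2 * Real.pi * Complex.I : ℂ)⁻¹ • ∮ u in C(σ, (R'' : ℝ)), (u - w)⁻¹ • rop A u)
        z := (hps.analyticAt_of_mem hzb').differentiableAt
    have heq : h = fun w => (2 * Real.pi * Complex.I : ℂ) •
        ((2 * Real.pi * Complex.I : ℂ)⁻¹ • ∮ u in C(σ, (R'' : ℝ)), (u - w)⁻¹ • rop A u) := by
      funext w
      rw [smul_inv_smul₀ h2πi, hhdef, hcoe]
    rw [heq]
    exact hg.const_smul (2 * Real.pi * Complex.I : ℂ)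
  have hcont_h : ∀ {s : Set ℂ}, s ⊆ ball σ R' → ContinuousOn h s := fun hs =>
    fun z hz => ((hdiff_h z (hs hz)).continuousAt).continuousWithinAt
  -- vanishing of ∮ h on the small circle
  have hzero : (∮ z in C(σ, r), h z) = 0 := by
    apply Complex.circleIntegral_eq_zero_of_differentiable_on_off_countable hr.le Set.countable_empty
    · exact hcont_h (closedBall_subset_ball hrR')
    · intro z hz
      exact hdiff_h z (ball_subset_ball hrR'.le hz.1)
  set Ir := ∮ z in C(σ, r), rop A z with hIrdef
  set IR := ∮ z in C(σ, R'), rop A z with hIRdef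
  -- key pointwise step on the small circle
  have step_z : ∀ z ∈ sphere σ r,
      ((ContinuousLinearMap.compL ℂ X X X).flip IR) (rop A z) =
        (2 * Real.pi * Complex.I : ℂ) • rop A z - h z := by
    intro z hzs
    have hzρ : z ∈ resolventSet A := hUρ (hsphere hr hrε hzs)
    have hzball : z ∈ ball σ R' := by
      rw [mem_ball, mem_sphere.mp hzs]; exact hrR'
    have hflip : ((ContinuousLinearMap.compL ℂ X X X).flip IR) (rop A z) =
        (ContinuousLinearMap.compL ℂ X X X (rop A z)) IR := rfl
    rw [hflip, hIRdef,
      ← circleIntegral_CLM_comm (ContinuousLinearMap.compL ℂ X X X (rop A z))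
        (hint hR'0 hR'ε)]
    have hptwise : Set.EqOn
        (fun w => (ContinuousLinearMap.compL ℂ X X X (rop A z)) (rop A w))
        (fun w => (w - z)⁻¹ • rop A z - (w - z)⁻¹ • rop A w) (sphere σ R') := by
      intro w hws
      have hwρ : w ∈ resolventSet A := hUρ (hsphere hR'0 hR'ε hws)
      have hne : w - z ≠ 0 := by
        rw [sub_ne_zero]
        intro hwz
        rw [hwz] at hws
        have h1 := mem_sphere.mp hws
        have h2 := mem_sphere.mp hzs
        rw [h2] at h1
        exact absurd h1 (ne_of_lt hrR')
      have hid := resolvent_id A hzρ hwρ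
      have hcomp : rop A z ∘L rop A w = (w - z)⁻¹ • (rop A z - rop A w) := by
        rw [hid, smul_smul, inv_mul_cancel₀ hne, one_smul]
      show (ContinuousLinearMap.compL ℂ X X X (rop A z)) (rop A w) =
        (w - z)⁻¹ • rop A z - (w - z)⁻¹ • rop A w
      have : (ContinuousLinearMap.compL ℂ X X X (rop A z)) (rop A w) =
          rop A z ∘L rop A w := rfl
      rw [this, hcomp, smul_sub]
    rw [circleIntegral.integral_congr hR'0.le hptwise]
    have hint1 : CircleIntegrable (fun w => (w - z)⁻¹ • rop A z) σ R' := by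
      apply ContinuousOn.circleIntegrable hR'0.le
      apply ContinuousOn.smul (f := fun w => (w - z)⁻¹) (g := fun _ => rop A z) _ continuousOn_const
      apply ContinuousOn.inv₀
      · exact (continuous_id.sub continuous_const).continuousOn
      · intro w hws
        rw [sub_ne_zero]
        intro hwz
        rw [hwz] at hws
        have h1 := mem_sphere.mp hws
        have h2 := mem_sphere.mp hzs
        rw [h2] at h1
        exact absurd h1 (ne_of_lt hrR')
    have hint2 : CircleIntegrable (fun w => (w - z)⁻¹ • rop A w) σ R' := by
      apply ContinuousOn.circleIntegrable hR'0.le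
      apply ContinuousOn.smul (f := fun w => (w - z)⁻¹) (g := fun w => rop A w)
      · apply ContinuousOn.inv₀
        · exact (continuous_id.sub continuous_const).continuousOn
        · intro w hws
          rw [sub_ne_zero]
          intro hwz
          rw [hwz] at hws
          have h1 := mem_sphere.mp hws
          have h2 := mem_sphere.mp hzs
          rw [h2] at h1
          exact absurd h1 (ne_of_lt hrR')
      · exact hcontU (hsphere hR'0 hR'ε)
    rw [circleIntegral.integral_sub hint1 hint2]
    rw [circleIntegral.integral_smul_const]
    rw [circleIntegral.integral_sub_inv_of_mem_ball hzball]
  -- main computation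
  have hIrIR : Ir ∘L IR = (2 * Real.pi * Complex.I : ℂ) • Ir := by
    have h1 : Ir ∘L IR = ((ContinuousLinearMap.compL ℂ X X X).flip IR) Ir := rfl
    rw [h1, hIrdef,
      ← circleIntegral_CLM_comm ((ContinuousLinearMap.compL ℂ X X X).flip IR)
        (hint hr hrε)]
    rw [circleIntegral.integral_congr hr.le step_z]
    have hintA : CircleIntegrable (fun z => (2 * Real.pi * Complex.I : ℂ) • rop A z) σ r := by
      apply ContinuousOn.circleIntegrable hr.le
      exact (hcontU (hsphere hr hrε)).const_smul (2 * Real.pi * Complex.I : ℂ)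
    have hintB : CircleIntegrable h σ r := by
      apply ContinuousOn.circleIntegrable hr.le
      apply hcont_h
      intro z hz
      rw [mem_ball, mem_sphere.mp hz]; exact hrR'
    rw [circleIntegral.integral_sub hintA hintB, hzero, sub_zero]
    rw [circleIntegral.integral_smul]
  -- conclude
  rw [ContinuousLinearMap.smul_comp, ContinuousLinearMap.comp_smul]
  have hQQ : Ir ∘L Ir = (2 * Real.pi * Complex.I : ℂ) • Ir := by
    rw [← hIrIR, hRr]
  rw [hQQ, smul_comm ((2 * Real.pi * Complex.I : ℂ)⁻¹) ((2 * Real.pi * Complex.I : ℂ))]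
  rw [inv_smul_smul₀ h2πi]

lemma mem_range_shift (A : X →ₗ.[ℂ] X) (h1 : SH1 A) {z z₀ : ℂ}
    (hz : z ∈ resolventSet A) (hz₀ : z₀ ∈ resolventSet A) {v : X}
    (hv : v ∈ Set.range (shiftApply A z₀)) : v ∈ Set.range (shiftApply A z) := by
  obtain ⟨x₀, hx₀⟩ := hv
  obtain ⟨u, hu⟩ : (x₀ : X) ∈ Set.range (shiftApply A z) := h1 z hz x₀.2
  refine ⟨x₀ - (z - z₀) • u, ?_⟩
  have hlin : shiftApply A z (x₀ - (z - z₀) • u) =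
      shiftApply A z x₀ - (z - z₀) • shiftApply A z u := by
    rw [← shiftL_coe, map_sub, map_smul]
  rw [hlin, hu, ← hx₀]
  have hss := shift_sub A z z₀ x₀
  rw [← hss]
  abel

lemma res_eq (A : X →ₗ.[ℂ] X) {z : ℂ} (hz : z ∈ resolventSet A) {v : X}
    (hv : v ∈ Set.range (shiftApply A z)) : res A z v = rop A z v := by
  have hy : ∃ x : A.domain, shiftApply A z x = v := hv
  rw [res, dif_pos hy]
  conv_rhs => rw [← hy.choose_spec]
  rw [rop_shift A hz]

lemma sphere_subset_punctured (σ : ℂ) {r' ε : ℝ} (h1 : 0 < r') (h2 : r' < ε) :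
    sphere σ r' ⊆ Metric.ball σ ε \ {σ} := by
  intro z hz
  rw [mem_sphere] at hz
  constructor
  · rw [mem_ball, hz]; exact h2
  · simp only [Set.mem_singleton_iff]
    intro hzσ
    rw [hzσ, dist_self] at hz
    exact absurd hz.symm (ne_of_gt h1)

lemma punctured_subset_resolvent (A : X →ₗ.[ℂ] X) {σ : ℂ} {ε : ℝ}
    (hiso : ∀ w : ℂ, w ≠ σ → ‖w - σ‖ < ε → w ∈ resolventSet A) :
    Metric.ball σ ε \ {σ} ⊆ resolventSet A := by
  rintro w ⟨hw1, hw2⟩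
  exact hiso w (by simpa using hw2) (by rw [← Complex.dist_eq]; exact mem_ball.mp hw1)

lemma rop_circleIntegrable (A : X →ₗ.[ℂ] X) {σ : ℂ} {ε r : ℝ}
    (hiso : ∀ w : ℂ, w ≠ σ → ‖w - σ‖ < ε → w ∈ resolventSet A)
    (hr : 0 < r) (hrε : r < ε) : CircleIntegrable (rop A) σ r := by
  have hU : IsOpen (Metric.ball σ ε \ {σ}) := isOpen_ball.sdiff isClosed_singleton
  apply ContinuousOn.circleIntegrable hr.le
  intro z hz
  exact (rop_continuousAt A hU (punctured_subset_resolvent A hiso)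
    (sphere_subset_punctured σ hr hrε hz)).continuousWithinAt

lemma laurent_eq (A : X →ₗ.[ℂ] X) (h1 : SH1 A) {σ z₀ : ℂ} {ε r : ℝ}
    (hiso : ∀ w : ℂ, w ≠ σ → ‖w - σ‖ < ε → w ∈ resolventSet A)
    (hr : 0 < r) (hrε : r < ε) (hz₀ : z₀ ∈ resolventSet A) {v : X}
    (hv : v ∈ Set.range (shiftApply A z₀)) :
    laurentCoeff A σ r (-1) v =
      ((2 * Real.pi * Complex.I : ℂ)⁻¹ • ∮ z in C(σ, r), rop A z) v := by
  rw [laurentCoeff]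
  simp only [show (-((-1 : ℤ) + 1)) = (0 : ℤ) by norm_num, zpow_zero, one_smul]
  have hEq : Set.EqOn (fun z => res A z v)
      (fun z => (ContinuousLinearMap.apply ℂ X v) (rop A z)) (sphere σ r) := by
    intro z hz
    have hzρ : z ∈ resolventSet A :=
      punctured_subset_resolvent A hiso (sphere_subset_punctured σ hr hrε hz)
    have hvz : v ∈ Set.range (shiftApply A z) := mem_range_shift A h1 hzρ hz₀ hv
    exact res_eq A hzρ hvz
  rw [circleIntegral.integral_congr hr.le hEq]
  rw [circleIntegral_CLM_comm (ContinuousLinearMap.apply ℂ X v)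
    (rop_circleIntegrable A hiso hr hrε)]
  rw [ContinuousLinearMap.smul_apply]
  rfl


end RieszAux

theorem statement9 {X : Type*} [NormedAddCommGroup X] [NormedSpace ℂ X] [CompleteSpace X]
    (A : X →ₗ.[ℂ] X) (hA : A.IsClosable) (h1 : SH1 A) (σ : ℂ)
    (hσ : σ ∈ spectrumSet A)
    (ε : ℝ) (hε : 0 < ε)
    (hiso : ∀ w : ℂ, w ≠ σ → ‖w - σ‖ < ε → w ∈ resolventSet A)
    (r : ℝ) (hr : 0 < r) (hrε : r < ε)
    (z₀ : ℂ) (hz₀ : z₀ ∈ resolventSet A) :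
    (∀ x : X, ∃! pq : X × X,
      pq.1 ∈ closure (laurentCoeff A σ r (-1) '' Set.range (shiftApply A z₀)) ∧
      pq.2 ∈ closure ((fun v => v - laurentCoeff A σ r (-1) v) '' Set.range (shiftApply A z₀)) ∧
      x = pq.1 + pq.2) ∧
    closure {v | v ∈ Set.range (shiftApply A z₀) ∧ laurentCoeff A σ r (-1) v = 0} ⊆
      closure ((fun v => v - laurentCoeff A σ r (-1) v) '' Set.range (shiftApply A z₀)) := by
  classical
  set Q : X →L[ℂ] X := (2 * Real.pi * Complex.I : ℂ)⁻¹ • ∮ z in C(σ, r), rop A z with hQdef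
  have hidem : ∀ x : X, Q (Q x) = Q x := by
    intro x
    have h := rop_idem A σ hε hiso hr hrε
    calc Q (Q x) = (Q ∘L Q) x := rfl
      _ = Q x := by rw [hQdef, h]
  have hdense : Dense (Set.range (shiftApply A z₀)) := hz₀.2.1
  have hPQ : ∀ v ∈ Set.range (shiftApply A z₀), laurentCoeff A σ r (-1) v = Q v :=
    fun v hv => laurent_eq A h1 hiso hr hrε hz₀ hv
  have himg1 : laurentCoeff A σ r (-1) '' Set.range (shiftApply A z₀) =
      (fun v => Q v) '' Set.range (shiftApply A z₀) := Set.image_congr hPQ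
  have himg2 : (fun v => v - laurentCoeff A σ r (-1) v) '' Set.range (shiftApply A z₀) =
      (fun v => v - Q v) '' Set.range (shiftApply A z₀) :=
    Set.image_congr (fun v hv => by rw [hPQ v hv])
  have hclos1 : closure (laurentCoeff A σ r (-1) '' Set.range (shiftApply A z₀)) =
      {x | Q x = x} := by
    rw [himg1]
    apply Set.Subset.antisymm
    · apply closure_minimal
      · rintro y ⟨v, hv, rfl⟩; exact hidem v
      · exact isClosed_eq Q.continuous continuous_id
    · intro x hx
      have hx' : Q x = x := hx
      have h2 : x ∈ (fun v => Q v) '' closure (Set.range (shiftApply A z₀)) :=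
        ⟨x, by rw [hdense.closure_eq]; trivial, hx'⟩
      exact image_closure_subset_closure_image Q.continuous h2
  have hclos2 : closure ((fun v => v - laurentCoeff A σ r (-1) v) ''
      Set.range (shiftApply A z₀)) = {x | Q x = 0} := by
    rw [himg2]
    apply Set.Subset.antisymm
    · apply closure_minimal
      · rintro y ⟨v, hv, rfl⟩
        show Q (v - Q v) = 0
        rw [map_sub, hidem v, sub_self]
      · exact isClosed_eq Q.continuous continuous_const
    · intro x hx
      have hx' : Q x = 0 := hx
      have hxx : x - Q x = x := by rw [hx', sub_zero]
      have h2 : x ∈ (fun v => v - Q v) '' closure (Set.range (shiftApply A z₀)) :=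
        ⟨x, by rw [hdense.closure_eq]; trivial, hxx⟩
      exact image_closure_subset_closure_image (continuous_id.sub Q.continuous) h2
  constructor
  · intro x
    refine ⟨(Q x, x - Q x), ⟨?_, ?_, ?_⟩, ?_⟩
    · rw [hclos1]; exact hidem x
    · rw [hclos2]; show Q (x - Q x) = 0; rw [map_sub, hidem x, sub_self]
    · simp
    · rintro ⟨p, q⟩ ⟨hp, hq, hx⟩
      rw [hclos1] at hp
      rw [hclos2] at hq
      have hp' : Q p = p := hp
      have hq' : Q q = 0 := hq
      have hQx : Q x = p := by rw [hx, map_add, hp', hq', add_zero]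
      have hq2 : q = x - Q x := by rw [hQx, hx]; abel
      exact Prod.ext hQx.symm hq2
  · apply closure_mono
    rintro v ⟨hvRg, hPv⟩
    exact ⟨v, hvRg, by show v - laurentCoeff A σ r (-1) v = v; rw [hPv, sub_zero]⟩

end CharOp
end

section
/- Consider the state space X = C([−h,0],ℂⁿ) and the operator D : D(D) ⊆ C_T(ℝ,X) → C_T(ℝ,X) with D(D) = {φ ∈ C_T¹(ℝ,X) : φ(t)′ ∈ X for all t} and (Dφ)(t) = φ(t)′ − φ̇(t), where ′ is the derivative in the state variable θ and ˙ the derivative in time t. Then D is closable, and its kernel is N(D) = {φ ∈ D(D) : φ(t)(θ) = φ(t+θ)(0) for all t ∈ ℝ, θ ∈ [−h,0]}. -/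
open scoped Topology
open Filter

namespace DDE

/-- The state space `X = C([-h,0], ℂⁿ)` of a classical delay differential equation. -/
abbrev St (n : ℕ) (h : ℝ) : Type := C(Set.Icc (-h) (0 : ℝ), Fin n → ℂ)

/-- `g` is the (continuous) derivative of the state `x ∈ C([-h,0],ℂⁿ)` with respect to the
state variable `θ`, i.e. `x' = g`. -/
def HasThetaDeriv (n : ℕ) (h : ℝ) (hle : (-h : ℝ) ≤ 0) (x g : St n h) : Prop :=
  ∀ θ : Set.Icc (-h) (0 : ℝ),
    HasDerivWithinAt (Set.IccExtend hle ⇑x) (g θ) (Set.Icc (-h) (0 : ℝ)) (θ : ℝ)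

/-- Membership of the pair `(φ, φθ)` in the domain of the operator `D`:
`φ ∈ C_T¹(ℝ,X)` and for every `t` the state derivative `φ(t)' = φθ(t)` exists in `X`. -/
def InDomD (n : ℕ) (h : ℝ) (hle : (-h : ℝ) ≤ 0) (T : ℝ) (φ φθ : ℝ → St n h) : Prop :=
  (∀ t, φ (t + T) = φ t) ∧ ContDiff ℝ 1 φ ∧ ∀ t, HasThetaDeriv n h hle (φ t) (φθ t)

open Set Asymptotics

variable {n : ℕ} {h : ℝ}

lemma hasDerivAt_comp_sub {φ : ℝ → St n h} (hφ : ContDiff ℝ 1 φ) (t a : ℝ) :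
    HasDerivAt (fun s => φ (t - s)) (-(deriv φ (t - a))) a := by
  have h1 : HasDerivAt φ (deriv φ (t - a)) (t - a) :=
    ((hφ.differentiable one_ne_zero) (t - a)).hasDerivAt
  have h2 : HasDerivAt (fun s : ℝ => t - s) (-1) a := by
    simpa using (hasDerivAt_id a).const_sub t
  have := h1.scomp a h2
  simpa [Function.comp_def] using this

lemma hasDerivAt_eval {φ : ℝ → St n h} (hφ : ContDiff ℝ 1 φ)
    (x : Set.Icc (-h) (0:ℝ)) (t : ℝ) :
    HasDerivAt (fun t => φ t x) ((deriv φ t) x) t := by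
  have := (ContinuousMap.evalCLM ℝ x).hasFDerivAt.comp_hasDerivAt t
    ((hφ.differentiable one_ne_zero) t).hasDerivAt
  exact this

lemma hasDerivAt_eval_shift {φ : ℝ → St n h} (hφ : ContDiff ℝ 1 φ)
    (x : Set.Icc (-h) (0:ℝ)) (c b : ℝ) :
    HasDerivAt (fun b => (φ (c + b)) x) ((deriv φ (c + b)) x) b := by
  have h2 : HasDerivAt (fun b : ℝ => c + b) 1 b := by
    simpa using (hasDerivAt_id b).const_add c
  have := (hasDerivAt_eval hφ x (c + b)).scomp b h2
  simpa [Function.comp_def] using this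

/-- Derivative of `s ↦ φ(t-s)(θ+s)` along a characteristic. -/
lemma char_deriv (hle : (-h:ℝ) ≤ 0) {φ φθ : ℝ → St n h}
    (hφ : ContDiff ℝ 1 φ)
    (hθ : ∀ t, HasThetaDeriv n h hle (φ t) (φθ t))
    (t θ : ℝ) {S : Set ℝ} (hS : ∀ s ∈ S, θ + s ∈ Set.Icc (-h) (0:ℝ))
    {a : ℝ} (ha : θ + a ∈ Set.Icc (-h) (0:ℝ)) :
    HasDerivWithinAt (fun s => Set.IccExtend hle ⇑(φ (t - s)) (θ + s))
      (φθ (t - a) (Set.projIcc (-h) 0 hle (θ + a))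
        - (deriv φ (t - a)) (Set.projIcc (-h) 0 hle (θ + a))) S a := by
  set p : ℝ → Set.Icc (-h) (0:ℝ) := fun s => Set.projIcc (-h) 0 hle (θ + s) with hp
  set M : St n h := deriv φ (t - a) with hM
  have hpa : ((p a : ℝ)) = θ + a := by
    simp only [hp, Set.projIcc_of_mem hle ha]
  have haff : HasDerivWithinAt (fun s : ℝ => θ + s) 1 S a := by
    simpa using ((hasDerivAt_id a).const_add θ).hasDerivWithinAt
  have hB : HasDerivWithinAt (fun s => Set.IccExtend hle ⇑(φ (t - a)) (θ + s))
      (φθ (t - a) (p a)) S a := by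
    have hg := (hθ (t - a)) (p a)
    have := hg.scomp_of_eq a haff hS hpa
    simpa [Function.comp_def] using this
  have hA : HasDerivWithinAt (fun s => (φ (t - s)) (p s) - (φ (t - a)) (p s))
      (-(M (p a))) S a := by
    rw [hasDerivWithinAt_iff_isLittleO]
    set Φ : ℝ → St n h := fun s => φ (t - s) - φ (t - a) with hΦdef
    have hΦ : HasDerivAt Φ (-M) a := (hasDerivAt_comp_sub hφ t a).sub_const _
    have hΦo : (fun s => Φ s - (s - a) • (-M)) =o[𝓝[S] a] (fun s => s - a) := by
      have := hasDerivAt_iff_isLittleO.mp hΦ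
      simp only [hΦdef, sub_self, sub_zero] at this
      exact this.mono nhdsWithin_le_nhds
    have h1 : (fun s => (Φ s) (p s) - (s - a) • ((-M) (p s))) =o[𝓝[S] a]
        (fun s => s - a) := by
      refine IsBigO.trans_isLittleO ?_ hΦo
      refine Asymptotics.isBigO_of_le _ (fun s => ?_)
      have : (Φ s) (p s) - (s - a) • ((-M) (p s)) = (Φ s - (s - a) • (-M)) (p s) := by
        simp
      rw [this]
      exact (Φ s - (s - a) • (-M)).norm_coe_le_norm (p s)
    have h2 : (fun s => (s - a) • ((-M) (p s) - (-M) (p a))) =o[𝓝[S] a]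
        (fun s => s - a) := by
      have hw : Filter.Tendsto (fun s => (-M) (p s) - (-M) (p a)) (𝓝[S] a) (𝓝 0) := by
        have hc : Continuous fun s => (-M) (p s) :=
          (-M).continuous.comp ((continuous_projIcc).comp (continuous_const.add continuous_id))
        have h0 : Filter.Tendsto (fun s => (-M) (p s) - (-M) (p a)) (𝓝[S] a)
            (𝓝 ((-M) (p a) - (-M) (p a))) :=
          ((hc.tendsto a).mono_left (nhdsWithin_le_nhds (s := S))).sub tendsto_const_nhds
        simpa using h0
      have hw' : (fun s => (-M) (p s) - (-M) (p a)) =o[𝓝[S] a] (fun _ => (1:ℝ)) :=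
        (Asymptotics.isLittleO_one_iff ℝ).mpr hw
      have := (Asymptotics.isBigO_refl (fun s : ℝ => s - a) (𝓝[S] a)).smul_isLittleO hw'
      simpa using this
    have hsum := h1.add h2
    refine hsum.congr' (Filter.Eventually.of_forall (fun s => ?_)) (Filter.EventuallyEq.rfl)
    simp only [hΦdef, ContinuousMap.sub_apply, ContinuousMap.neg_apply, smul_sub, smul_neg,
      sub_self, sub_zero]
    abel
  have htot := hA.fun_add hB
  have hfun : (fun s => ((φ (t - s)) (p s) - (φ (t - a)) (p s)) +
      Set.IccExtend hle ⇑(φ (t - a)) (θ + s)) =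
      (fun s => Set.IccExtend hle ⇑(φ (t - s)) (θ + s)) := by
    funext s
    exact sub_add_cancel _ _
  rw [hfun] at htot
  have hval : -(M (p a)) + φθ (t - a) (p a) = φθ (t - a) (p a) - M (p a) := by abel
  rw [hval] at htot
  exact htot

/-- If `Dφ = 0` then `φ` has the translation property. -/
lemma trans_of_ker (hle : (-h:ℝ) ≤ 0) {φ φθ : ℝ → St n h}
    (hφ : ContDiff ℝ 1 φ)
    (hθ : ∀ t, HasThetaDeriv n h hle (φ t) (φθ t))
    (hker : ∀ t, φθ t - deriv φ t = 0)
    (t θv : ℝ) (hθv : θv ∈ Set.Icc (-h) (0:ℝ)) :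
    Set.IccExtend hle ⇑(φ t) θv = Set.IccExtend hle ⇑(φ (t + θv)) 0 := by
  have hab : (0:ℝ) ≤ -θv := neg_nonneg.mpr hθv.2
  have hS : ∀ s ∈ Set.Icc (0:ℝ) (-θv), θv + s ∈ Set.Icc (-h) (0:ℝ) := by
    intro s hs
    constructor
    · linarith [hθv.1, hs.1]
    · linarith [hs.2]
  set v : ℝ → (Fin n → ℂ) := fun s => Set.IccExtend hle ⇑(φ (t - s)) (θv + s) with hv
  set g : ℝ → (Fin n → ℂ) := fun s =>
    φθ (t - s) (Set.projIcc (-h) 0 hle (θv + s))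
      - (deriv φ (t - s)) (Set.projIcc (-h) 0 hle (θv + s)) with hg
  have hd : ∀ x ∈ Set.Icc (0:ℝ) (-θv), HasDerivWithinAt v (g x) (Set.Icc (0:ℝ) (-θv)) x :=
    fun x hx => char_deriv hle hφ hθ t θv hS (hS x hx)
  have hbound : ∀ x ∈ Set.Ico (0:ℝ) (-θv), ‖g x‖ ≤ 0 := by
    intro x hx
    have : g x = (φθ (t - x) - deriv φ (t - x)) (Set.projIcc (-h) 0 hle (θv + x)) := by
      simp [hg]
    rw [this, hker (t - x)]
    simp
  have hmvt := norm_image_sub_le_of_norm_deriv_le_segment' hd hbound (-θv)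
    (Set.right_mem_Icc.2 hab)
  rw [zero_mul] at hmvt
  have heq : v (-θv) = v 0 := sub_eq_zero.mp (norm_le_zero_iff.mp hmvt)
  have h1 : v (-θv) = Set.IccExtend hle ⇑(φ (t + θv)) 0 := by
    simp only [hv, sub_neg_eq_add]
    norm_num
  have h2 : v 0 = Set.IccExtend hle ⇑(φ t) θv := by
    simp only [hv, sub_zero, add_zero]
  rw [h1, h2] at heq
  exact heq.symm

/-- Closability, pointwise at interior `θ`. -/
lemma psi_eq_zero_lt (hle : (-h:ℝ) ≤ 0) {φ : ℕ → ℝ → St n h} {φθ : ℕ → ℝ → St n h}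
    {ψ : ℝ → St n h}
    (hdom : ∀ m, ContDiff ℝ 1 (φ m) ∧ ∀ t, HasThetaDeriv n h hle (φ m t) (φθ m t))
    (hφ0 : TendstoUniformly (fun m => φ m) 0 atTop)
    (hDψ : TendstoUniformly (fun m t => φθ m t - deriv (φ m) t) ψ atTop)
    (t₀ : ℝ) (x : Set.Icc (-h) (0:ℝ)) (hx : (x:ℝ) < 0) : ψ t₀ x = 0 := by
  rw [Metric.tendstoUniformly_iff] at hφ0 hDψ
  set θ : ℝ := (x : ℝ) with hθdef
  have hs₀ : 0 < -θ := by linarith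
  have hS : ∀ s ∈ Set.Icc (0:ℝ) (-θ), θ + s ∈ Set.Icc (-h) (0:ℝ) := by
    intro s hs; exact ⟨by linarith [x.2.1, hs.1], by linarith [hs.2]⟩
  -- the characteristic curves
  set v : ℕ → ℝ → (Fin n → ℂ) := fun m s => Set.IccExtend hle ⇑(φ m (t₀ - s)) (θ + s) with hv
  set D : ℕ → ℝ → St n h := fun m t => φθ m t - deriv (φ m) t with hD
  suffices hmain : ∀ ε > (0:ℝ), ‖ψ t₀ x‖ ≤ 3 * ε by
    have h0 : ‖ψ t₀ x‖ ≤ 0 := by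
      by_contra hc
      push_neg at hc
      have := hmain (‖ψ t₀ x‖ / 4) (by linarith)
      linarith
    simpa using norm_le_zero_iff.mp h0
  intro ε hε
  obtain ⟨m, hm⟩ := (hDψ ε hε).exists
  -- Claim 1 : increments of `v m` are small
  have claim1 : ∀ s ∈ Set.Icc (0:ℝ) (-θ), ‖v m s - v m 0‖ ≤ 2 * ε * s := by
    intro s hs
    refine le_of_forall_pos_le_add ?_
    intro δ hδ
    obtain ⟨k, hk1, hk2⟩ := ((hDψ ε hε).and (hφ0 (δ / 4) (by linarith))).exists
    have hsub : Set.Icc (0:ℝ) s ⊆ Set.Icc (0:ℝ) (-θ) := Set.Icc_subset_Icc le_rfl hs.2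
    have hS' : ∀ s' ∈ Set.Icc (0:ℝ) s, θ + s' ∈ Set.Icc (-h) (0:ℝ) :=
      fun s' hs' => hS s' (hsub hs')
    set g : ℝ → (Fin n → ℂ) := fun s' =>
      (D m (t₀ - s')) (Set.projIcc (-h) 0 hle (θ + s'))
        - (D k (t₀ - s')) (Set.projIcc (-h) 0 hle (θ + s')) with hgdef
    have hd : ∀ y ∈ Set.Icc (0:ℝ) s,
        HasDerivWithinAt (fun s' => v m s' - v k s') (g y) (Set.Icc (0:ℝ) s) y := by
      intro y hy
      have hm' := char_deriv hle (hdom m).1 (hdom m).2 t₀ θ hS' (hS' y hy)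
      have hk' := char_deriv hle (hdom k).1 (hdom k).2 t₀ θ hS' (hS' y hy)
      have := hm'.fun_sub hk'
      simpa [hgdef, hD, hv, ContinuousMap.sub_apply] using this
    have hbound : ∀ y ∈ Set.Ico (0:ℝ) s, ‖g y‖ ≤ 2 * ε := by
      intro y _
      have h1 : g y = ((D m (t₀ - y)) - (D k (t₀ - y)))
          (Set.projIcc (-h) 0 hle (θ + y)) := by simp [hgdef]
      rw [h1]
      refine le_trans (ContinuousMap.norm_coe_le_norm _ _) ?_
      have hd1 : dist (D m (t₀ - y)) (D k (t₀ - y)) ≤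
          dist (ψ (t₀ - y)) (D m (t₀ - y)) + dist (ψ (t₀ - y)) (D k (t₀ - y)) :=
        dist_triangle_left _ _ _
      have := (hm (t₀ - y)).le
      have := (hk1 (t₀ - y)).le
      rw [← dist_eq_norm]
      simp only [hD] at *
      linarith
    by_cases hs0 : (0:ℝ) ≤ s
    · have hmvt := norm_image_sub_le_of_norm_deriv_le_segment' hd hbound s
        (Set.right_mem_Icc.2 hs0)
      have hvk : ∀ s', s' ∈ Set.Icc (0:ℝ) (-θ) → ‖v k s'‖ ≤ δ / 4 := by
        intro s' _
        have h1 : v k s' = (φ k (t₀ - s')) (Set.projIcc (-h) 0 hle (θ + s')) := rfl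
        rw [h1]
        refine le_trans ((φ k (t₀ - s')).norm_coe_le_norm _) ?_
        have h2 := (hk2 (t₀ - s')).le
        rw [Pi.zero_apply, dist_zero_left] at h2
        exact h2
      have tri : ‖v m s - v m 0‖ ≤ ‖(v m s - v k s) - (v m 0 - v k 0)‖ + ‖v k s‖ + ‖v k 0‖ := by
        have : v m s - v m 0 = ((v m s - v k s) - (v m 0 - v k 0)) + v k s - v k 0 := by abel
        rw [this]
        calc ‖((v m s - v k s) - (v m 0 - v k 0)) + v k s - v k 0‖
            ≤ ‖((v m s - v k s) - (v m 0 - v k 0)) + v k s‖ + ‖v k 0‖ := norm_sub_le _ _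
          _ ≤ ‖(v m s - v k s) - (v m 0 - v k 0)‖ + ‖v k s‖ + ‖v k 0‖ := by
              gcongr; exact norm_add_le _ _
      have hvs := hvk s hs
      have hv0 := hvk 0 (Set.left_mem_Icc.2 hs₀.le)
      linarith [tri, hmvt, hvs, hv0]
    · exact absurd hs.1 hs0
  -- Claim 2 : the derivative of `v m` at `0` is small
  have hder : HasDerivWithinAt (v m)
      ((D m t₀) x) (Set.Icc (0:ℝ) (-θ)) 0 := by
    have h0mem : θ + 0 ∈ Set.Icc (-h) (0:ℝ) := by rw [add_zero]; exact x.2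
    have := char_deriv hle (hdom m).1 (hdom m).2 t₀ θ hS h0mem
    have hproj : Set.projIcc (-h) 0 hle θ = x := by
      rw [hθdef, Set.projIcc_of_mem hle x.2]
    simpa [hproj, hD, ContinuousMap.sub_apply] using this
  have hslope := hasDerivWithinAt_iff_tendsto_slope.mp hder
  have hsetne : (𝓝[Set.Icc (0:ℝ) (-θ) \ {0}] (0:ℝ)).NeBot := by
    have hmem : (0:ℝ) ∈ closure (Set.Ioc (0:ℝ) (-θ)) := by
      rw [closure_Ioc (ne_of_lt hs₀)]
      exact ⟨le_rfl, hs₀.le⟩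
    have hne : (𝓝[Set.Ioc (0:ℝ) (-θ)] (0:ℝ)).NeBot := mem_closure_iff_nhdsWithin_neBot.mp hmem
    have hsub : Set.Ioc (0:ℝ) (-θ) ⊆ Set.Icc (0:ℝ) (-θ) \ {0} := by
      intro y hy
      exact ⟨⟨hy.1.le, hy.2⟩, by simp [ne_of_gt hy.1]⟩
    exact hne.mono (nhdsWithin_mono 0 hsub)
  have hbound2 : ∀ᶠ s in 𝓝[Set.Icc (0:ℝ) (-θ) \ {0}] (0:ℝ),
      ‖slope (v m) 0 s‖ ≤ 2 * ε := by
    filter_upwards [self_mem_nhdsWithin] with s hs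
    obtain ⟨hs1, hs2⟩ := hs
    have hspos : 0 < s := lt_of_le_of_ne hs1.1 (by simpa [eq_comm] using hs2)
    rw [slope_def_module]
    rw [norm_smul]
    have := claim1 s hs1
    have hn : ‖(s - 0)⁻¹‖ = s⁻¹ := by
      rw [sub_zero, Real.norm_eq_abs, abs_inv, abs_of_pos hspos]
    rw [hn]
    calc s⁻¹ * ‖v m s - v m 0‖ ≤ s⁻¹ * (2 * ε * s) := by
          gcongr
      _ = 2 * ε := by field_simp
  have hDm_le : ‖(D m t₀) x‖ ≤ 2 * ε :=
    le_of_tendsto hslope.norm hbound2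
  have h1 : ‖ψ t₀ x - (D m t₀) x‖ ≤ dist (ψ t₀) (D m t₀) := by
    rw [dist_eq_norm]
    exact (ψ t₀ - D m t₀).norm_coe_le_norm x
  calc ‖ψ t₀ x‖ ≤ ‖ψ t₀ x - (D m t₀) x‖ + ‖(D m t₀) x‖ := by
        simpa using norm_add_le (ψ t₀ x - (D m t₀) x) ((D m t₀) x)
    _ ≤ ε + 2 * ε := by
        have := (hm t₀).le
        have := h1.trans this
        linarith
    _ = 3 * ε := by ring

/-- A state vanishing on `[-h,0)` vanishes. -/
lemma state_eq_zero (hh : 0 < h) {f : St n h}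
    (hf : ∀ x : Set.Icc (-h) (0:ℝ), (x:ℝ) < 0 → f x = 0) : f = 0 := by
  have hle : (-h:ℝ) ≤ 0 := by linarith
  refine ContinuousMap.ext fun x => ?_
  rw [ContinuousMap.zero_apply]
  rcases lt_or_eq_of_le x.2.2 with hx | hx
  · exact hf x hx
  · -- boundary case by continuity
    set g : ℝ → (Fin n → ℂ) := Set.IccExtend hle ⇑f with hg
    have hgc : Continuous g := f.continuous.Icc_extend'
    have hne : (𝓝[Set.Ico (-h) (0:ℝ)] (0:ℝ)).NeBot := by
      refine mem_closure_iff_nhdsWithin_neBot.mp ?_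
      rw [closure_Ico (by linarith : (-h:ℝ) ≠ 0)]
      exact ⟨hle, le_rfl⟩
    have h1 : Filter.Tendsto g (𝓝[Set.Ico (-h) (0:ℝ)] (0:ℝ)) (𝓝 (g 0)) :=
      (hgc.tendsto 0).mono_left nhdsWithin_le_nhds
    have h2 : Filter.Tendsto g (𝓝[Set.Ico (-h) (0:ℝ)] (0:ℝ)) (𝓝 0) := by
      refine Filter.Tendsto.congr' ?_ tendsto_const_nhds
      filter_upwards [self_mem_nhdsWithin] with y hy
      have : g y = f ⟨y, ⟨hy.1, hy.2.le⟩⟩ := Set.IccExtend_of_mem hle _ ⟨hy.1, hy.2.le⟩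
      rw [this, hf _ hy.2]
    have h3 : g 0 = 0 := tendsto_nhds_unique h1 h2
    have h4 : g 0 = f x := by
      rw [hg, Set.IccExtend_of_mem hle _ (Set.right_mem_Icc.2 hle)]
      congr 1
      exact Subtype.ext hx.symm
    rw [← h4, h3]

/-- Translation property implies kernel membership. -/
lemma ker_of_trans (hh : 0 < h) (hle : (-h:ℝ) ≤ 0) {φ φθ : ℝ → St n h}
    (hφ : ContDiff ℝ 1 φ)
    (hθ : ∀ t, HasThetaDeriv n h hle (φ t) (φθ t))
    (htr : ∀ (t : ℝ) (θ : Set.Icc (-h) (0 : ℝ)),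
      φ t θ = φ (t + θ) ⟨0, Set.right_mem_Icc.mpr hle⟩)
    (t : ℝ) : φθ t - deriv φ t = 0 := by
  set z0 : Set.Icc (-h) (0:ℝ) := ⟨0, Set.right_mem_Icc.mpr hle⟩ with hz0
  have key : ∀ x : Set.Icc (-h) (0:ℝ), φθ t x = (deriv φ t) x := by
    intro x
    have hu : UniqueDiffWithinAt ℝ (Set.Icc (-h) (0:ℝ)) (x:ℝ) :=
      (uniqueDiffOn_Icc (by linarith : (-h:ℝ) < 0)) _ x.2
    -- step 1 : φθ t x = deriv φ (t + x) z0
    have h1 : HasDerivWithinAt (Set.IccExtend hle ⇑(φ t)) (φθ t x)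
        (Set.Icc (-h) (0:ℝ)) (x:ℝ) := hθ t x
    have h2' : HasDerivAt (fun b => (φ (t + b)) z0) ((deriv φ (t + (x:ℝ))) z0) (x:ℝ) :=
      hasDerivAt_eval_shift hφ z0 t (x:ℝ)
    have h2 : HasDerivWithinAt (Set.IccExtend hle ⇑(φ t)) ((deriv φ (t + (x:ℝ))) z0)
        (Set.Icc (-h) (0:ℝ)) (x:ℝ) := by
      refine h2'.hasDerivWithinAt.congr ?_ ?_
      · intro y hy
        rw [Set.IccExtend_of_mem hle _ hy]
        exact htr t ⟨y, hy⟩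
      · rw [Set.IccExtend_of_mem hle _ x.2]
        have := htr t x
        simpa using this
    have e1 : φθ t x = (deriv φ (t + (x:ℝ))) z0 := by
      rw [← h1.derivWithin hu, ← h2.derivWithin hu]
    -- step 2 : deriv φ t x = deriv φ (t + x) z0
    have g1 : HasDerivAt (fun t' => (φ t') x) ((deriv φ t) x) t := hasDerivAt_eval hφ x t
    have g2 : HasDerivAt (fun t' => (φ (t' + (x:ℝ))) z0) ((deriv φ (t + (x:ℝ))) z0) t := by
      have h3 : HasDerivAt (fun t' : ℝ => t' + (x:ℝ)) 1 t := by
        simpa using (hasDerivAt_id t).add_const (x:ℝ)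
      have := (hasDerivAt_eval hφ z0 (t + (x:ℝ))).scomp t h3
      simpa [Function.comp_def] using this
    have g2' : HasDerivAt (fun t' => (φ t') x) ((deriv φ (t + (x:ℝ))) z0) t := by
      refine g2.congr_of_eventuallyEq ?_
      filter_upwards with t'
      have := htr t' x
      simpa using this
    have e2 : (deriv φ t) x = (deriv φ (t + (x:ℝ))) z0 := g1.unique g2'
    rw [e1, e2]
  ext x
  simp [key x]


/-- The operator `D` of Section 4.1: `(Dφ)(t) = φ(t)' - φ̇(t)` is closable, and its kernel
consists exactly of the functions with the translation property
`φ(t)(θ) = φ(t+θ)(0)` for all `t ∈ ℝ`, `θ ∈ [-h,0]`. -/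
theorem statement16 (n : ℕ) (h T : ℝ) (hh : 0 < h) (hT : 0 < T) :
    -- `D` is closable: if `φₘ → 0` uniformly and `Dφₘ → ψ` uniformly, then `ψ = 0`
    (∀ (φ φθ : ℕ → ℝ → St n h) (ψ : ℝ → St n h),
      (∀ m, InDomD n h (neg_nonpos.mpr hh.le) T (φ m) (φθ m)) →
      TendstoUniformly (fun m => φ m) 0 atTop →
      TendstoUniformly (fun m t => φθ m t - deriv (φ m) t) ψ atTop →
      ψ = 0) ∧
    -- kernel characterization: `Dφ = 0` iff `φ` has the translation property
    (∀ φ φθ : ℝ → St n h, InDomD n h (neg_nonpos.mpr hh.le) T φ φθ →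
      ((∀ t, φθ t - deriv φ t = 0) ↔
        ∀ (t : ℝ) (θ : Set.Icc (-h) (0 : ℝ)),
          φ t θ = φ (t + θ) ⟨0, Set.right_mem_Icc.mpr (neg_nonpos.mpr hh.le)⟩)) := by
  have hle : (-h:ℝ) ≤ 0 := neg_nonpos.mpr hh.le
  constructor
  · intro φ φθ ψ hdom hφ0 hDψ
    have hdom' : ∀ m, ContDiff ℝ 1 (φ m) ∧
        ∀ t, HasThetaDeriv n h (neg_nonpos.mpr hh.le) (φ m t) (φθ m t) :=
      fun m => ⟨(hdom m).2.1, (hdom m).2.2⟩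
    funext t₀
    have h0 : ψ t₀ = 0 :=
      state_eq_zero hh (fun x hx => psi_eq_zero_lt _ hdom' hφ0 hDψ t₀ x hx)
    simpa using h0
  · intro φ φθ hdom
    constructor
    · intro hker t θ
      have htr := trans_of_ker (neg_nonpos.mpr hh.le) hdom.2.1 hdom.2.2 hker t ↑θ θ.2
      rw [Set.IccExtend_val] at htr
      rw [Set.IccExtend_of_mem _ _ (Set.right_mem_Icc.2 hle)] at htr
      exact htr
    · intro htr t
      exact ker_of_trans hh (neg_nonpos.mpr hh.le) hdom.2.1 hdom.2.2 htr t

end DDE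
end

section
/- Let X = C([−h,0],ℂⁿ) and let D₀ be the restriction of D (defined by (Dφ)(t) = φ(t)′ − φ̇(t)) to D(D₀) = {φ ∈ D(D) : φ(t)(0) = 0 for all t}. Then for every z ∈ ℂ the operator zI − D₀ is injective with dense range containing C_T¹(ℝ,X), its algebraic inverse is given by [R(z,D₀)φ](t)(θ) = ∫_θ^0 e^{z(θ−s)} φ(t+θ−s)(s) ds, and ‖R(z,D₀)φ‖_∞ ≤ M_z ‖φ‖_∞ with M_z = (1 − e^{−h Re z})/Re z (interpreted as h when Re z = 0). Hence ρ(D₀) = ℂ. -/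
open scoped Topology
open Filter intervalIntegral

namespace DDE

/-- Membership in the domain of the restriction `D₀` of `D`: additionally `φ(t)(0) = 0`. -/
def InDomD0 (n : ℕ) (h : ℝ) (hle : (-h : ℝ) ≤ 0) (T : ℝ) (φ φθ : ℝ → St n h) : Prop :=
  InDomD n h hle T φ φθ ∧ ∀ t, φ t ⟨0, Set.right_mem_Icc.mpr hle⟩ = 0

/-- The constant `M_z = (1 - e^{-h Re z})/Re z`, interpreted as `h` when `Re z = 0`. -/
noncomputable def Mz (h : ℝ) (z : ℂ) : ℝ :=
  if z.re = 0 then h else (1 - Real.exp (-h * z.re)) / z.re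

section Aux

variable {n : ℕ} {h : ℝ} (hle : (-h : ℝ) ≤ 0) (z : ℂ)

noncomputable def PInt (χ : ℝ → St n h) (t θ : ℝ) : Fin n → ℂ :=
  ∫ s in θ..(0:ℝ), Complex.exp (z * ((θ - s : ℝ) : ℂ)) •
    Set.IccExtend hle (⇑(χ (t + θ - s))) s

lemma PInt_def (χ : ℝ → St n h) (t θ : ℝ) :
    PInt hle z χ t θ = ∫ s in θ..(0:ℝ), Complex.exp (z * ((θ - s : ℝ) : ℂ)) •
      Set.IccExtend hle (⇑(χ (t + θ - s))) s := rfl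

lemma cont_eval {χ : ℝ → St n h} (hχ : Continuous χ) :
    Continuous fun q : ℝ × ℝ => Set.IccExtend hle (⇑(χ q.1)) q.2 := by
  have : (fun q : ℝ × ℝ => Set.IccExtend hle (⇑(χ q.1)) q.2)
      = fun q : ℝ × ℝ => (χ q.1) (Set.projIcc (-h) 0 hle q.2) := rfl
  rw [this]
  have hp : Continuous fun q : ℝ × ℝ => (χ q.1, Set.projIcc (-h) 0 hle q.2) :=
    (hχ.comp continuous_fst).prodMk ((continuous_projIcc (h := hle)).comp continuous_snd)
  exact ContinuousEval.continuous_eval.comp hp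

lemma cont_integrand {χ : ℝ → St n h} (hχ : Continuous χ) :
    Continuous fun p : (ℝ × ℝ) × ℝ =>
      Complex.exp (z * ((p.1.2 - p.2 : ℝ) : ℂ)) •
        Set.IccExtend hle (⇑(χ (p.1.1 + p.1.2 - p.2))) p.2 := by
  have h1 : Continuous fun p : (ℝ × ℝ) × ℝ => (p.1.1 + p.1.2 - p.2, p.2) := by fun_prop
  have h2 := (cont_eval hle hχ).comp h1
  have h3 : Continuous fun p : (ℝ × ℝ) × ℝ => Complex.exp (z * ((p.1.2 - p.2 : ℝ) : ℂ)) := by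
    fun_prop
  exact h3.smul h2

lemma PInt_integrable {χ : ℝ → St n h} (hχ : Continuous χ) (t θ a b : ℝ) :
    IntervalIntegrable (fun s => Complex.exp (z * ((θ - s : ℝ) : ℂ)) •
      Set.IccExtend hle (⇑(χ (t + θ - s))) s) MeasureTheory.volume a b := by
  have h1 : Continuous fun s : ℝ => (((t, θ) : ℝ × ℝ), s) := by fun_prop
  exact ((cont_integrand hle z hχ).comp h1).intervalIntegrable a b

lemma PInt_cont {χ : ℝ → St n h} (hχ : Continuous χ) :
    Continuous fun p : ℝ × ℝ => PInt hle z χ p.1 p.2 := by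
  have hF := continuous_parametric_intervalIntegral_of_continuous
    (μ := MeasureTheory.volume) (a₀ := (0:ℝ))
    (f := fun (p : ℝ × ℝ) (s : ℝ) => Complex.exp (z * ((p.2 - s : ℝ) : ℂ)) •
      Set.IccExtend hle (⇑(χ (p.1 + p.2 - s))) s)
    (cont_integrand hle z hχ) (continuous_snd)
  have : (fun p : ℝ × ℝ => PInt hle z χ p.1 p.2)
      = fun p : ℝ × ℝ => -(∫ s in (0:ℝ)..p.2, Complex.exp (z * ((p.2 - s : ℝ) : ℂ)) •
          Set.IccExtend hle (⇑(χ (p.1 + p.2 - s))) s) := by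
    funext p
    rw [PInt, intervalIntegral.integral_symm]
  rw [this]
  exact hF.neg

lemma PInt_norm_le (hh : 0 ≤ h) (χ : ℝ → St n h) {t θ C : ℝ}
    (hC : ∀ u ∈ Set.Icc (t - h) t, ‖χ u‖ ≤ C) (hθ : θ ∈ Set.Icc (-h) (0:ℝ)) :
    ‖PInt hle z χ t θ‖ ≤ Real.exp (h * |z.re|) * C * h := by
  have hC0 : 0 ≤ C := le_trans (norm_nonneg _) (hC t ⟨by linarith [hθ.1], le_refl t⟩)
  have key : ∀ x ∈ Set.uIoc θ (0:ℝ), ‖Complex.exp (z * ((θ - x : ℝ) : ℂ)) •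
      Set.IccExtend hle (⇑(χ (t + θ - x))) x‖ ≤ Real.exp (h * |z.re|) * C := by
    intro x hx
    rw [Set.uIoc_of_le hθ.2] at hx
    have hx1 : θ < x := hx.1
    have hx2 : x ≤ 0 := hx.2
    have hd : -h ≤ θ - x ∧ θ - x ≤ 0 := ⟨by linarith [hθ.1], by linarith⟩
    rw [norm_smul]
    have hexp : ‖Complex.exp (z * ((θ - x : ℝ) : ℂ))‖ ≤ Real.exp (h * |z.re|) := by
      rw [Complex.norm_exp]
      apply Real.exp_le_exp.mpr
      have : (z * ((θ - x : ℝ) : ℂ)).re = z.re * (θ - x) := by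
        simp [Complex.mul_re]
      rw [this]
      calc z.re * (θ - x) ≤ |z.re * (θ - x)| := le_abs_self _
        _ = |z.re| * |θ - x| := abs_mul _ _
        _ ≤ |z.re| * h := by
            apply mul_le_mul_of_nonneg_left _ (abs_nonneg _)
            rw [abs_le]; exact ⟨hd.1, by linarith [hd.2]⟩
        _ = h * |z.re| := mul_comm _ _
    have hval : ‖Set.IccExtend hle (⇑(χ (t + θ - x))) x‖ ≤ C := by
      refine le_trans (ContinuousMap.norm_coe_le_norm _ _) (hC _ ⟨by linarith [hd.1], by linarith [hd.2]⟩)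
    exact mul_le_mul hexp hval (norm_nonneg _) (Real.exp_nonneg _)
  refine le_trans (intervalIntegral.norm_integral_le_of_norm_le_const key) ?_
  have : |0 - θ| ≤ h := by
    rw [abs_le]; constructor <;> [linarith [hθ.2]; linarith [hθ.1]]
  calc Real.exp (h * |z.re|) * C * |0 - θ| ≤ Real.exp (h * |z.re|) * C * h := by
        exact mul_le_mul_of_nonneg_left this (by positivity)
    _ = _ := rfl

attribute [irreducible] PInt

noncomputable def phiMap (χ : ℝ → St n h) (hχ : Continuous χ) : ℝ → St n h :=
  fun t => ⟨fun θ => PInt hle z χ t ↑θ,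
    (PInt_cont hle z hχ).comp ((continuous_const.prodMk continuous_subtype_val :
      Continuous fun θ : Set.Icc (-h) (0:ℝ) => (t, (θ:ℝ))))⟩

lemma phiMap_apply (χ : ℝ → St n h) (hχ : Continuous χ) (t : ℝ) (θ : Set.Icc (-h) (0:ℝ)) :
    phiMap hle z χ hχ t θ = PInt hle z χ t ↑θ := rfl

lemma phiMap_continuous (χ : ℝ → St n h) (hχ : Continuous χ) :
    Continuous (phiMap hle z χ hχ) := by
  let Pc : C(ℝ × Set.Icc (-h) (0:ℝ), Fin n → ℂ) :=
    ⟨fun q => PInt hle z χ q.1 ↑q.2,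
      (PInt_cont hle z hχ).comp ((continuous_fst.prodMk (continuous_subtype_val.comp continuous_snd)))⟩
  have h1 : phiMap hle z χ hχ = ⇑(ContinuousMap.curry Pc) := by
    funext t; ext θ; rfl
  rw [h1]
  exact (ContinuousMap.curry Pc).continuous

lemma phiMap_periodic (χ : ℝ → St n h) (hχ : Continuous χ) (T : ℝ)
    (hper : ∀ t, χ (t + T) = χ t) (t : ℝ) :
    phiMap hle z χ hχ (t + T) = phiMap hle z χ hχ t := by
  apply ContinuousMap.ext; intro θ
  simp only [phiMap_apply]
  simp only [PInt_def]
  apply intervalIntegral.integral_congr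
  intro s _
  have h1 : t + T + ↑θ - s = (t + ↑θ - s) + T := by ring
  simp only [h1, hper]

lemma PInt_zero (χ : ℝ → St n h) (t : ℝ) : PInt hle z χ t 0 = 0 := by
  rw [PInt_def]; exact intervalIntegral.integral_same

lemma PInt_sub_sub {ψ ψd : ℝ → St n h} (hψ : Continuous ψ) (hψd : Continuous ψd)
    (δ t θ : ℝ) :
    PInt hle z ψ (t + δ) θ - PInt hle z ψ t θ - δ • PInt hle z ψd t θ
      = PInt hle z (fun u => ψ (u + δ) - ψ u - δ • ψd u) t θ := by
  simp only [PInt_def]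
  have h1 := PInt_integrable hle z hψ (t + δ) θ θ 0
  have h2 := PInt_integrable hle z hψ t θ θ 0
  have h3 : IntervalIntegrable (fun s => δ • (Complex.exp (z * ((θ - s : ℝ) : ℂ)) •
      Set.IccExtend hle (⇑(ψd (t + θ - s))) s)) MeasureTheory.volume θ 0 :=
    (PInt_integrable hle z hψd t θ θ 0).smul δ
  rw [← intervalIntegral.integral_smul]
  rw [← intervalIntegral.integral_sub h1 h2, ← intervalIntegral.integral_sub (h1.sub h2) h3]
  apply intervalIntegral.integral_congr
  intro s _
  have harg : t + δ + θ - s = (t + θ - s) + δ := by ring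
  simp only [harg]
  simp only [Set.IccExtend_apply, ContinuousMap.coe_sub, ContinuousMap.coe_smul,
    Pi.sub_apply, Pi.smul_apply, smul_sub]
  rw [smul_comm δ (Complex.exp (z * ((θ - s : ℝ) : ℂ)))]

lemma keyU (hh : 0 ≤ h) {ψ : ℝ → St n h} (hψ : ContDiff ℝ 1 ψ) (t₀ : ℝ) {ε : ℝ}
    (hε : 0 < ε) :
    ∃ δ₀ > 0, ∀ t ∈ Set.Icc (t₀ - 1) (t₀ + 1), ∀ δ : ℝ, |δ| ≤ δ₀ →
      ∀ θ ∈ Set.Icc (-h) (0:ℝ),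
      ‖PInt hle z ψ (t + δ) θ - PInt hle z ψ t θ - δ • PInt hle z (deriv ψ) t θ‖
        ≤ ε * |δ| := by
  have hψc : Continuous ψ := hψ.continuous
  have hψ'c : Continuous (deriv ψ) := hψ.continuous_deriv le_rfl
  have hdiff : Differentiable ℝ ψ := hψ.differentiable one_ne_zero
  set K := Real.exp (h * |z.re|) with hK
  have hK0 : 0 < K := Real.exp_pos _
  have hd : (0:ℝ) < K * h + 1 := by positivity
  set ε' := ε / (K * h + 1) with hε'def
  have hε'0 : 0 < ε' := by positivity
  -- uniform continuity of deriv ψ on a big compact set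
  obtain ⟨δ₁, hδ₁0, hδ₁⟩ := (Metric.uniformContinuousOn_iff.mp
    ((isCompact_Icc (a := t₀ - h - 2) (b := t₀ + h + 2)).uniformContinuousOn_of_continuous
      hψ'c.continuousOn)) ε' hε'0
  refine ⟨min (δ₁ / 2) 1, by positivity, ?_⟩
  intro t ht δ hδ θ hθ
  have hδ1 : |δ| ≤ 1 := le_trans hδ (min_le_right _ _)
  have hδhalf : |δ| < δ₁ := lt_of_le_of_lt (le_trans hδ (min_le_left _ _)) (by linarith)
  rw [PInt_sub_sub hle z hψc hψ'c δ t θ]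
  have hbnd : ∀ u ∈ Set.Icc (t - h) t,
      ‖ψ (u + δ) - ψ u - δ • deriv ψ u‖ ≤ ε' * |δ| := by
    intro u hu
    have huK : u ∈ Set.Icc (t₀ - h - 2) (t₀ + h + 2) :=
      ⟨by have := ht.1; have := hu.1; linarith, by have := ht.2; have := hu.2; linarith⟩
    set s : Set ℝ := Set.uIcc u (u + δ) with hs
    have hsub : s ⊆ Set.Icc (t₀ - h - 2) (t₀ + h + 2) := by
      intro r hr
      have h1' := hu.1; have h2' := hu.2; have h3' := ht.1; have h4' := ht.2
      have ha := le_abs_self δ; have hb := neg_abs_le δ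
      rcases Set.mem_uIcc.mp hr with ⟨hA, hB⟩ | ⟨hA, hB⟩ <;>
        exact ⟨by linarith, by linarith⟩
    have habs : ∀ r ∈ s, |r - u| ≤ |δ| := by
      intro r hr
      rcases Set.mem_uIcc.mp hr with ⟨h1, h2⟩ | ⟨h1, h2⟩ <;>
        rw [abs_le] <;>
        · have ha := le_abs_self δ
          have hb := neg_abs_le δ
          constructor <;> linarith
    have hder : ∀ r ∈ s, HasDerivWithinAt (fun r => ψ r - (r - u) • deriv ψ u)
        (deriv ψ r - deriv ψ u) s r := by
      intro r _
      have h1 : HasDerivAt (fun x : ℝ => (x - u) • deriv ψ u) ((1:ℝ) • deriv ψ u) r :=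
        ((hasDerivAt_id r).sub_const u).smul_const (deriv ψ u)
      rw [one_smul] at h1
      exact (((hdiff r).hasDerivAt).sub h1).hasDerivWithinAt
    have hbound : ∀ r ∈ s, ‖deriv ψ r - deriv ψ u‖ ≤ ε' := by
      intro r hr
      have h1 := hδ₁ r (hsub hr) u huK
      rw [Real.dist_eq] at h1
      rw [← dist_eq_norm]
      exact le_of_lt (h1 (lt_of_le_of_lt (habs r hr) hδhalf))
    have hconv : Convex ℝ s := by rw [hs, Set.uIcc]; exact convex_Icc _ _
    have := Convex.norm_image_sub_le_of_norm_hasDerivWithin_le hder hbound hconv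
      (Set.left_mem_uIcc) (Set.right_mem_uIcc)
    have e0 : (0:ℝ) • deriv ψ u = 0 := by ext x; simp
    rw [add_sub_cancel_left, sub_self, e0, sub_zero, sub_right_comm,
      Real.norm_eq_abs] at this
    exact this
  have := PInt_norm_le hle z hh (fun u => ψ (u + δ) - ψ u - δ • deriv ψ u) hbnd hθ
  refine le_trans this ?_
  have hmain : K * h * ε' ≤ ε := by
    rw [hε'def]
    calc K * h * (ε / (K * h + 1)) = ε * ((K * h) / (K * h + 1)) := by ring
      _ ≤ ε * 1 := mul_le_mul_of_nonneg_left ((div_le_one hd).mpr (by linarith)) hε.le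
      _ = ε := mul_one ε
  calc K * (ε' * |δ|) * h = (K * h * ε') * |δ| := by ring
    _ ≤ ε * |δ| := mul_le_mul_of_nonneg_right hmain (abs_nonneg δ)


lemma phiMap_hasDerivAt (hh : 0 ≤ h) {ψ : ℝ → St n h} (hψ : ContDiff ℝ 1 ψ) (t : ℝ) :
    HasDerivAt (phiMap hle z ψ hψ.continuous)
      (phiMap hle z (deriv ψ) (hψ.continuous_deriv le_rfl) t) t := by
  rw [hasDerivAt_iff_isLittleO, Asymptotics.isLittleO_iff]
  intro c hc
  obtain ⟨δ₀, hδ₀0, hU⟩ := keyU hle z hh hψ t hc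
  have hev : ∀ᶠ t' in 𝓝 t, |t' - t| ≤ δ₀ := by
    filter_upwards [Metric.closedBall_mem_nhds t hδ₀0] with t' ht'
    rw [Metric.mem_closedBall, Real.dist_eq] at ht'
    exact ht'
  filter_upwards [hev] with t' ht'
  have h1 : ∀ θ : Set.Icc (-h) (0:ℝ),
      ‖(phiMap hle z ψ hψ.continuous t' - phiMap hle z ψ hψ.continuous t
          - (t' - t) • phiMap hle z (deriv ψ) (hψ.continuous_deriv le_rfl) t) θ‖
        ≤ c * |t' - t| := by
    intro θ
    have h2 := hU t ⟨by linarith, by linarith⟩ (t' - t) ht' ↑θ θ.2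
    rw [show t + (t' - t) = t' by ring] at h2
    simpa [ContinuousMap.sub_apply, ContinuousMap.smul_apply, phiMap_apply] using h2
  have hnorm := (ContinuousMap.norm_le _ (by positivity)).mpr h1
  simpa [Real.norm_eq_abs] using hnorm

lemma phiMap_deriv (hh : 0 ≤ h) {ψ : ℝ → St n h} (hψ : ContDiff ℝ 1 ψ) (t : ℝ) :
    deriv (phiMap hle z ψ hψ.continuous) t
      = phiMap hle z (deriv ψ) (hψ.continuous_deriv le_rfl) t :=
  (phiMap_hasDerivAt hle z hh hψ t).deriv

lemma phiMap_contDiff (hh : 0 ≤ h) {ψ : ℝ → St n h} (hψ : ContDiff ℝ 1 ψ) :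
    ContDiff ℝ 1 (phiMap hle z ψ hψ.continuous) := by
  rw [contDiff_one_iff_deriv]
  refine ⟨fun t => (phiMap_hasDerivAt hle z hh hψ t).differentiableAt, ?_⟩
  have : deriv (phiMap hle z ψ hψ.continuous)
      = phiMap hle z (deriv ψ) (hψ.continuous_deriv le_rfl) :=
    funext fun t => phiMap_deriv hle z hh hψ t
  rw [this]
  exact phiMap_continuous hle z _ _

lemma PInt_char {ψ : ℝ → St n h} (c θ : ℝ) :
    PInt hle z ψ (c - θ) θ = Complex.exp (z * (θ : ℂ)) •
      ∫ s in θ..(0:ℝ), Complex.exp (z * ((-s : ℝ) : ℂ)) •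
        Set.IccExtend hle (⇑(ψ (c - s))) s := by
  rw [PInt_def, ← intervalIntegral.integral_smul]
  apply intervalIntegral.integral_congr
  intro s _
  have h1 : c - θ + θ - s = c - s := by ring
  simp only [h1]
  rw [show z * ((θ - s : ℝ) : ℂ) = z * (θ : ℂ) + z * ((-s : ℝ) : ℂ) by push_cast; ring,
    Complex.exp_add, mul_smul]

lemma phiMap_thetaDeriv (hh : 0 ≤ h) {ψ : ℝ → St n h} (hψ : ContDiff ℝ 1 ψ) (t : ℝ)
    (θ : Set.Icc (-h) (0:ℝ)) :
    HasDerivWithinAt (Set.IccExtend hle ⇑(phiMap hle z ψ hψ.continuous t))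
      (z • PInt hle z ψ t ↑θ + PInt hle z (deriv ψ) t ↑θ - ψ t θ)
      (Set.Icc (-h) (0:ℝ)) ↑θ := by
  have hψc : Continuous ψ := hψ.continuous
  have hψ'c : Continuous (deriv ψ) := hψ.continuous_deriv le_rfl
  set c : ℝ := t + ↑θ with hc
  set g : ℝ → Fin n → ℂ := fun s => Complex.exp (z * ((-s : ℝ) : ℂ)) •
    Set.IccExtend hle (⇑(ψ (c - s))) s with hg
  have hgc : Continuous g := by
    have h1 : Continuous fun s : ℝ => ((c - s, s) : ℝ × ℝ) := by fun_prop
    have h2 := (cont_eval hle (χ := ψ) hψc).comp h1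
    have h3 : Continuous fun s : ℝ => Complex.exp (z * ((-s : ℝ) : ℂ)) := by fun_prop
    exact h3.smul h2
  set I : ℝ → Fin n → ℂ := fun x => ∫ s in x..(0:ℝ), g s with hI
  have hIderiv : HasDerivAt I (-(g ↑θ)) ↑θ :=
    intervalIntegral.integral_hasDerivAt_left (hgc.intervalIntegrable _ _)
      (hgc.stronglyMeasurableAtFilter _ _) hgc.continuousAt
  have hexp : HasDerivAt (fun x : ℝ => Complex.exp (z * (x : ℂ)))
      (Complex.exp (z * ((↑θ:ℝ) : ℂ)) * z) ↑θ := by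
    have h1 : HasDerivAt (fun x : ℝ => z * (x : ℂ)) z ↑θ := by
      simpa using (Complex.ofRealCLM.hasDerivAt (x := (↑θ:ℝ))).const_mul z
    simpa using h1.cexp
  have hG2 : HasDerivAt (fun x : ℝ => Complex.exp (z * (x:ℂ)) • I x)
      (Complex.exp (z * ((↑θ:ℝ):ℂ)) • (-(g ↑θ))
        + (Complex.exp (z * ((↑θ:ℝ):ℂ)) * z) • I ↑θ) ↑θ := hexp.smul hIderiv
  have e1 : Complex.exp (z * ((↑θ:ℝ):ℂ)) • g ↑θ = ψ t θ := by
    rw [hg]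
    simp only []
    rw [show c - (↑θ:ℝ) = t by rw [hc]; ring]
    rw [smul_smul, ← Complex.exp_add,
      show z * (((↑θ:ℝ)):ℂ) + z * (((-(↑θ:ℝ)):ℝ):ℂ) = 0 by push_cast; ring,
      Complex.exp_zero, one_smul, Set.IccExtend_val]
  have e2 : Complex.exp (z * ((↑θ:ℝ):ℂ)) • I ↑θ = PInt hle z ψ t ↑θ := by
    rw [hI]
    rw [← PInt_char hle z c ↑θ, show c - (↑θ:ℝ) = t by rw [hc]; ring]
  set A := PInt hle z (deriv ψ) t ↑θ with hA
  have hG1 : HasDerivWithinAt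
      (fun x : ℝ => PInt hle z ψ t x - PInt hle z ψ (t + ↑θ - x) x) A
      (Set.Icc (-h) (0:ℝ)) ↑θ := by
    rw [hasDerivWithinAt_iff_isLittleO, Asymptotics.isLittleO_iff]
    intro cc hcc
    obtain ⟨δ₀, hδ₀0, hU⟩ := keyU hle z hh hψ t (half_pos hcc)
    have hcont : Continuous fun p : ℝ × ℝ => PInt hle z (deriv ψ) p.1 p.2 :=
      PInt_cont hle z hψ'c
    have htd : Filter.Tendsto (fun x : ℝ => PInt hle z (deriv ψ) (t - (x - ↑θ)) x)
        (𝓝[Set.Icc (-h) (0:ℝ)] ↑θ) (𝓝 A) := by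
      have h1 : Filter.Tendsto (fun x : ℝ => ((t - (x - ↑θ), x) : ℝ × ℝ)) (𝓝 (↑θ:ℝ))
          (𝓝 (t, (↑θ:ℝ))) := by
        have hco : Continuous fun x : ℝ => ((t - (x - ↑θ), x) : ℝ × ℝ) := by fun_prop
        have h2 := hco.tendsto (↑θ:ℝ)
        simpa using h2
      exact (hcont.tendsto (t, (↑θ:ℝ))).comp (h1.mono_left nhdsWithin_le_nhds)
    have hev2 := htd.eventually_mem (Metric.closedBall_mem_nhds A (half_pos hcc))
    have hev1 : ∀ᶠ x in 𝓝[Set.Icc (-h) (0:ℝ)] ((θ:ℝ)), |x - (θ:ℝ)| ≤ min δ₀ 1 := by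
      apply Filter.Eventually.filter_mono nhdsWithin_le_nhds
      filter_upwards [Metric.closedBall_mem_nhds ((θ:ℝ)) (lt_min hδ₀0 one_pos)] with x hx
      rw [Metric.mem_closedBall, Real.dist_eq] at hx
      exact hx
    filter_upwards [hev1, hev2, eventually_mem_nhdsWithin] with x h1 h2 h3
    have hd0 : |x - ↑θ| ≤ δ₀ := le_trans h1 (min_le_left _ _)
    have hd1 := abs_le.mp (le_trans h1 (min_le_right _ _))
    have hU' := hU (t - (x - ↑θ)) ⟨by linarith [hd1.1, hd1.2], by linarith [hd1.1, hd1.2]⟩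
      (x - ↑θ) hd0 x h3
    rw [show t - (x - ↑θ) + (x - ↑θ) = t by ring] at hU'
    rw [Metric.mem_closedBall, dist_eq_norm] at h2
    show ‖(PInt hle z ψ t x - PInt hle z ψ (t + ↑θ - x) x)
        - (PInt hle z ψ t ↑θ - PInt hle z ψ (t + ↑θ - ↑θ) ↑θ) - (x - ↑θ) • A‖
      ≤ cc * ‖x - ↑θ‖
    have key : (PInt hle z ψ t x - PInt hle z ψ (t + ↑θ - x) x)
        - (PInt hle z ψ t ↑θ - PInt hle z ψ (t + ↑θ - ↑θ) ↑θ) - (x - ↑θ) • A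
        = (PInt hle z ψ t x - PInt hle z ψ (t - (x - ↑θ)) x
            - (x - ↑θ) • PInt hle z (deriv ψ) (t - (x - ↑θ)) x)
          + (x - ↑θ) • (PInt hle z (deriv ψ) (t - (x - ↑θ)) x - A) := by
      rw [show t + (↑θ:ℝ) - x = t - (x - ↑θ) by ring, show t + (↑θ:ℝ) - ↑θ = t by ring,
        sub_self, sub_zero, smul_sub]
      abel
    rw [key]
    calc ‖_ + _‖ ≤ ‖PInt hle z ψ t x - PInt hle z ψ (t - (x - ↑θ)) x
            - (x - ↑θ) • PInt hle z (deriv ψ) (t - (x - ↑θ)) x‖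
          + ‖(x - ↑θ) • (PInt hle z (deriv ψ) (t - (x - ↑θ)) x - A)‖ := norm_add_le _ _
      _ ≤ cc / 2 * |x - ↑θ| + |x - ↑θ| * (cc / 2) := by
          refine add_le_add hU' ?_
          rw [norm_smul, Real.norm_eq_abs]
          exact mul_le_mul_of_nonneg_left h2 (abs_nonneg _)
      _ = cc * |x - ↑θ| := by ring
      _ = cc * ‖x - ↑θ‖ := by rw [Real.norm_eq_abs]
  have hsum := hG1.add (hG2.hasDerivWithinAt (s := Set.Icc (-h) (0:ℝ)))
  have hfun : ∀ x ∈ Set.Icc (-h) (0:ℝ),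
      Set.IccExtend hle ⇑(phiMap hle z ψ hψ.continuous t) x
        = (fun x : ℝ => (PInt hle z ψ t x - PInt hle z ψ (t + ↑θ - x) x)
            + Complex.exp (z * (x:ℂ)) • I x) x := by
    intro x hx
    simp only []
    have hx1 : Set.IccExtend hle ⇑(phiMap hle z ψ hψ.continuous t) x
        = PInt hle z ψ t x := by
      rw [Set.IccExtend_of_mem hle _ hx]
      rfl
    rw [hx1, hI]
    rw [← PInt_char hle z c x, show c - x = t + ↑θ - x by rw [hc]]
    abel
  have hval : A + (Complex.exp (z * ((↑θ:ℝ):ℂ)) • (-(g ↑θ))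
        + (Complex.exp (z * ((↑θ:ℝ):ℂ)) * z) • I ↑θ)
      = z • PInt hle z ψ t ↑θ + PInt hle z (deriv ψ) t ↑θ - ψ t θ := by
    rw [smul_neg, e1, mul_comm, mul_smul, e2, hA]
    abel
  rw [← hval]
  exact hsum.congr hfun (hfun ↑θ θ.2)

lemma char_wderiv (hh : 0 < h) {φ φθ ψ : ℝ → St n h}
    (hcd : ContDiff ℝ 1 φ)
    (hθd : ∀ u, ∀ θ' : Set.Icc (-h) (0:ℝ), HasDerivWithinAt (Set.IccExtend hle ⇑(φ u))
      ((φθ u) θ') (Set.Icc (-h) (0:ℝ)) ↑θ')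
    (heq : ∀ u, z • φ u - (φθ u - deriv φ u) = ψ u)
    (a : ℝ) {s : ℝ} (hs0 : 0 ≤ s) (hsh : s < h) :
    HasDerivWithinAt (fun r : ℝ => Set.IccExtend hle (⇑(φ (a + r))) (-r))
      (Set.IccExtend hle (⇑(ψ (a + s))) (-s)
        - z • Set.IccExtend hle (⇑(φ (a + s))) (-s)) (Set.Ici s) s := by
  have hdiff : Differentiable ℝ φ := hcd.differentiable one_ne_zero
  have hmem : -s ∈ Set.Icc (-h) (0:ℝ) := ⟨by linarith, by linarith⟩
  have hphith : φθ (a + s) = z • φ (a + s) + deriv φ (a + s) - ψ (a + s) := by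
    rw [← heq (a + s)]; abel
  have hB0 := hθd (a + s) ⟨-s, hmem⟩
  have hneg : HasDerivWithinAt (fun r : ℝ => -r) (-1) (Set.Icc s h) s :=
    (hasDerivAt_neg' s).hasDerivWithinAt
  have hmaps : Set.MapsTo (fun r : ℝ => -r) (Set.Icc s h) (Set.Icc (-h) (0:ℝ)) := by
    intro r hr
    show -r ∈ Set.Icc (-h) (0:ℝ)
    rw [Set.mem_Icc] at hr ⊢
    constructor <;> linarith [hr.1, hr.2, hs0]
  have hB1 := hB0.scomp (x := s) hneg hmaps
  have hIcc_mem : Set.Icc s h ∈ 𝓝[Set.Ici s] s :=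
    mem_nhdsWithin.mpr ⟨Set.Iio h, isOpen_Iio, hsh, fun r hr => ⟨hr.2, le_of_lt hr.1⟩⟩
  have hB2 := hB1.mono_of_mem_nhdsWithin hIcc_mem
  have hB : HasDerivWithinAt (fun r : ℝ => Set.IccExtend hle (⇑(φ (a + s))) (-r))
      ((-1 : ℝ) • (φθ (a + s)) ⟨-s, hmem⟩) (Set.Ici s) s := hB2
  rw [hasDerivWithinAt_iff_isLittleO]
  have hφa : HasDerivAt (fun r : ℝ => φ (a + r)) (deriv φ (a + s)) s :=
    HasDerivAt.comp_const_add a s ((hdiff (a + s)).hasDerivAt)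
  have o1 : (fun r => Set.IccExtend hle
        (⇑(φ (a + r) - φ (a + s) - (r - s) • deriv φ (a + s))) (-r))
      =o[𝓝[Set.Ici s] s] fun r => r - s := by
    have hlo := hasDerivAt_iff_isLittleO.mp hφa
    refine Asymptotics.IsBigO.trans_isLittleO ?_ (hlo.mono nhdsWithin_le_nhds)
    apply Asymptotics.isBigO_of_le
    intro r
    rw [Set.IccExtend_apply]
    exact ContinuousMap.norm_coe_le_norm _ _
  have o2 := hasDerivWithinAt_iff_isLittleO.mp hB
  have o3 : (fun r => (r - s) • (Set.IccExtend hle (⇑(deriv φ (a + s))) (-r)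
        - Set.IccExtend hle (⇑(deriv φ (a + s))) (-s)))
      =o[𝓝[Set.Ici s] s] fun r => r - s := by
    rw [Asymptotics.isLittleO_iff]
    intro c hc
    have hcont : Continuous fun r : ℝ => Set.IccExtend hle (⇑(deriv φ (a + s))) (-r) := by
      have h1 : Continuous (Set.IccExtend hle (⇑(deriv φ (a + s)))) :=
        (map_continuous (deriv φ (a + s))).comp (continuous_projIcc (h := hle))
      exact h1.comp continuous_neg
    have htend := (hcont.tendsto s).eventually_mem
      (Metric.closedBall_mem_nhds (Set.IccExtend hle (⇑(deriv φ (a + s))) (-s)) hc)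
    apply Filter.Eventually.filter_mono nhdsWithin_le_nhds
    filter_upwards [htend] with r hr
    rw [Metric.mem_closedBall, dist_eq_norm] at hr
    calc ‖(r - s) • (Set.IccExtend hle (⇑(deriv φ (a + s))) (-r)
          - Set.IccExtend hle (⇑(deriv φ (a + s))) (-s))‖
        = |r - s| * ‖Set.IccExtend hle (⇑(deriv φ (a + s))) (-r)
          - Set.IccExtend hle (⇑(deriv φ (a + s))) (-s)‖ := by
          rw [norm_smul, Real.norm_eq_abs]
      _ ≤ |r - s| * c := mul_le_mul_of_nonneg_left hr (abs_nonneg _)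
      _ = c * ‖r - s‖ := by rw [Real.norm_eq_abs]; ring
  have osum := o1.add (o2.add o3)
  have hsplit : ∀ r : ℝ, Set.IccExtend hle
      (⇑(φ (a + r) - φ (a + s) - (r - s) • deriv φ (a + s))) (-r)
      = Set.IccExtend hle (⇑(φ (a + r))) (-r) - Set.IccExtend hle (⇑(φ (a + s))) (-r)
        - (r - s) • Set.IccExtend hle (⇑(deriv φ (a + s))) (-r) := by
    intro r
    simp only [Set.IccExtend_apply, ContinuousMap.coe_sub, ContinuousMap.coe_smul,
      Pi.sub_apply, Pi.smul_apply]
  refine osum.congr' (Filter.EventuallyEq.of_eq (funext fun r => ?_)) Filter.EventuallyEq.rfl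
  rw [hphith]
  simp only [Function.comp, ContinuousMap.add_apply, ContinuousMap.sub_apply,
    ContinuousMap.smul_apply, neg_smul, one_smul, smul_add, smul_sub, smul_neg]
  rw [← Set.IccExtend_of_mem hle (⇑(φ (a + s))) hmem,
    ← Set.IccExtend_of_mem hle (⇑(deriv φ (a + s))) hmem,
    ← Set.IccExtend_of_mem hle (⇑(ψ (a + s))) hmem, hsplit r]
  abel

lemma char_bound (hh : 0 < h) {T : ℝ} {φ φθ ψ : ℝ → St n h}
    (hdom : InDomD0 n h hle T φ φθ)
    (heq : ∀ u, z • φ u - (φθ u - deriv φ u) = ψ u)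
    {C : ℝ} (hC : ∀ u, ‖ψ u‖ ≤ C) (t : ℝ) : ‖φ t‖ ≤ Mz h z * C := by
  obtain ⟨⟨hper, hcd, hθd⟩, hzero⟩ := hdom
  have hC0 : 0 ≤ C := le_trans (norm_nonneg _) (hC 0)
  have hφc : Continuous φ := hcd.continuous
  have hθd' : ∀ u, ∀ θ' : Set.Icc (-h) (0:ℝ),
      HasDerivWithinAt (Set.IccExtend hle ⇑(φ u)) ((φθ u) θ')
        (Set.Icc (-h) (0:ℝ)) ↑θ' := fun u => hθd u
  have hpt : ∀ θ : Set.Icc (-h) (0:ℝ), ‖φ t θ‖ ≤ Mz h z * C := by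
    intro θ
    set b : ℝ := -(θ : ℝ) with hbdef
    have hb0 : 0 ≤ b := by rw [hbdef]; linarith [θ.2.2]
    have hbh : b ≤ h := by rw [hbdef]; linarith [θ.2.1]
    set a : ℝ := t + (θ:ℝ) with hadef
    set w : ℝ → Fin n → ℂ := fun r => Set.IccExtend hle (⇑(φ (a + r))) (-r) with hwdef
    set f : ℝ → Fin n → ℂ := fun r => Complex.exp (z * (r:ℂ)) • w r with hfdef
    have hw0 : w 0 = 0 := by
      rw [hwdef]
      show Set.IccExtend hle (⇑(φ (a + 0))) (-0) = 0
      rw [add_zero, neg_zero, Set.IccExtend_of_mem hle _ (Set.right_mem_Icc.mpr hle)]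
      exact hzero a
    have hwb : w b = φ t θ := by
      rw [hwdef]
      show Set.IccExtend hle (⇑(φ (a + b))) (-b) = φ t θ
      rw [show a + b = t by rw [hadef, hbdef]; ring, show -b = ((θ:ℝ)) by rw [hbdef]; ring,
        Set.IccExtend_val]
    have hwcont : Continuous w := by
      have h1 : Continuous fun r : ℝ => ((a + r, -r) : ℝ × ℝ) := by fun_prop
      exact (cont_eval hle hφc).comp h1
    have hfc : ContinuousOn f (Set.Icc 0 b) := by
      apply Continuous.continuousOn
      exact (by fun_prop : Continuous fun r : ℝ => Complex.exp (z * (r:ℂ))).smul hwcont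
    have hfd : ∀ r ∈ Set.Ico 0 b, HasDerivWithinAt f
        (Complex.exp (z * (r:ℂ)) • Set.IccExtend hle (⇑(ψ (a + r))) (-r))
        (Set.Ici r) r := by
      intro r hr
      have hwd := char_wderiv hle z hh hcd hθd' heq a hr.1 (lt_of_lt_of_le hr.2 hbh)
      have hexp : HasDerivAt (fun x : ℝ => Complex.exp (z * (x : ℂ)))
          (Complex.exp (z * ((r:ℝ) : ℂ)) * z) r := by
        have h1 : HasDerivAt (fun x : ℝ => z * (x : ℂ)) z r := by
          simpa using (Complex.ofRealCLM.hasDerivAt (x := r)).const_mul z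
        simpa using h1.cexp
      have hcomb := (hexp.hasDerivWithinAt (s := Set.Ici r)).smul hwd
      refine HasDerivWithinAt.congr_deriv hcomb ?_
      rw [smul_sub, smul_smul]
      abel
    have hbnd : ∀ r ∈ Set.Ico 0 b,
        ‖Complex.exp (z * (r:ℂ)) • Set.IccExtend hle (⇑(ψ (a + r))) (-r)‖
          ≤ Real.exp (z.re * r) * C := by
      intro r _
      rw [norm_smul, Complex.norm_exp,
        show (z * ((r:ℝ):ℂ)).re = z.re * r by simp [Complex.mul_re]]
      apply mul_le_mul_of_nonneg_left _ (Real.exp_nonneg _)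
      rw [Set.IccExtend_apply]
      exact le_trans (ContinuousMap.norm_coe_le_norm _ _) (hC _)
    have hf0 : ‖f 0‖ = 0 := by
      rw [hfdef]
      show ‖Complex.exp (z * ((0:ℝ):ℂ)) • w 0‖ = 0
      rw [hw0, smul_zero, norm_zero]
    have hfb : ‖f b‖ = Real.exp (z.re * b) * ‖φ t θ‖ := by
      rw [hfdef]
      show ‖Complex.exp (z * ((b:ℝ):ℂ)) • w b‖ = _
      rw [hwb, norm_smul, Complex.norm_exp,
        show (z * ((b:ℝ):ℂ)).re = z.re * b by simp [Complex.mul_re]]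
    by_cases hre : z.re = 0
    · -- z.re = 0
      have hB : ∀ x:ℝ, HasDerivAt (fun y : ℝ => C * y) (C * 1) x :=
        fun x => (hasDerivAt_id x).const_mul C
      have hbnd' : ∀ r ∈ Set.Ico 0 b,
          ‖Complex.exp (z * (r:ℂ)) • Set.IccExtend hle (⇑(ψ (a + r))) (-r)‖ ≤ C * 1 := by
        intro r hr
        have := hbnd r hr
        rw [hre, zero_mul, Real.exp_zero, one_mul] at this
        rw [mul_one]
        exact this
      have hres := image_norm_le_of_norm_deriv_right_le_deriv_boundary hfc hfd
        (by rw [hf0, mul_zero] : ‖f 0‖ ≤ C * 0) hB hbnd'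
        (Set.right_mem_Icc.mpr hb0)
      rw [hfb, hre, zero_mul, Real.exp_zero, one_mul] at hres
      rw [Mz, if_pos hre]
      calc ‖φ t θ‖ ≤ C * b := hres
        _ ≤ C * h := mul_le_mul_of_nonneg_left hbh hC0
        _ = h * C := mul_comm _ _
    · -- z.re ≠ 0
      set R := z.re with hRdef
      have hB : ∀ x:ℝ, HasDerivAt (fun y : ℝ => C * ((Real.exp (y * R) - 1) / R))
          (C * Real.exp (x * R)) x := by
        intro x
        have h1 : HasDerivAt (fun y:ℝ => y * R) R x := hasDerivAt_mul_const R
        have h2 := (Real.hasDerivAt_exp (x * R)).comp x h1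
        have h3 := ((h2.sub_const 1).div_const R).const_mul C
        refine HasDerivAt.congr_deriv h3 ?_
        rw [mul_div_cancel_right₀ _ hre]
      have hbnd' : ∀ r ∈ Set.Ico 0 b,
          ‖Complex.exp (z * (r:ℂ)) • Set.IccExtend hle (⇑(ψ (a + r))) (-r)‖
            ≤ C * Real.exp (r * R) := by
        intro r hr
        refine le_trans (hbnd r hr) ?_
        rw [mul_comm C, mul_comm z.re r]
      have hres := image_norm_le_of_norm_deriv_right_le_deriv_boundary hfc hfd
        (by rw [hf0]; simp : ‖f 0‖ ≤ C * ((Real.exp ((0:ℝ) * R) - 1) / R)) hB hbnd'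
        (Set.right_mem_Icc.mpr hb0)
      rw [hfb] at hres
      have hexpb : (0:ℝ) < Real.exp (z.re * b) := Real.exp_pos _
      have step1 : ‖φ t θ‖ ≤ Real.exp (-(b * R)) * (C * ((Real.exp (b * R) - 1) / R)) := by
        have h4 : Real.exp (-(b * R)) * (Real.exp (z.re * b) * ‖φ t θ‖)
            ≤ Real.exp (-(b * R)) * (C * ((Real.exp (b * R) - 1) / R)) :=
          mul_le_mul_of_nonneg_left hres (Real.exp_nonneg _)
        calc ‖φ t θ‖ = Real.exp (-(b * R)) * (Real.exp (z.re * b) * ‖φ t θ‖) := by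
              rw [← mul_assoc, ← Real.exp_add, hRdef,
                show -(b * z.re) + z.re * b = 0 by ring, Real.exp_zero, one_mul]
          _ ≤ _ := h4
      have halg : Real.exp (-(b * R)) * (C * ((Real.exp (b * R) - 1) / R))
          = C * ((1 - Real.exp (-(b * R))) / R) := by
        rw [mul_comm (Real.exp (-(b * R))), mul_assoc]
        congr 1
        rw [div_mul_eq_mul_div, mul_comm, mul_sub, ← Real.exp_add,
          show -(b * R) + b * R = 0 by ring, Real.exp_zero, mul_one]
      have hmono : (1 - Real.exp (-(b * R))) / R ≤ (1 - Real.exp (-h * R)) / R := by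
        rcases lt_or_gt_of_ne hre with hRn | hRp
        · rw [div_le_div_right_of_neg hRn]
          have : Real.exp (-(b * R)) ≤ Real.exp (-h * R) := by
            apply Real.exp_le_exp.mpr
            nlinarith
          linarith
        · rw [div_le_div_iff_of_pos_right hRp]
          have : Real.exp (-h * R) ≤ Real.exp (-(b * R)) := by
            apply Real.exp_le_exp.mpr
            nlinarith
          linarith
      rw [Mz, if_neg hre]
      calc ‖φ t θ‖ ≤ Real.exp (-(b * R)) * (C * ((Real.exp (b * R) - 1) / R)) := step1
        _ = C * ((1 - Real.exp (-(b * R))) / R) := halg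
        _ ≤ C * ((1 - Real.exp (-h * R)) / R) := mul_le_mul_of_nonneg_left hmono hC0
        _ = (1 - Real.exp (-h * z.re)) / z.re * C := by rw [hRdef, mul_comm]
  have hMzC : 0 ≤ Mz h z * C :=
    le_trans (norm_nonneg _) (hpt ⟨0, Set.right_mem_Icc.mpr hle⟩)
  exact (ContinuousMap.norm_le _ hMzC).mpr hpt

lemma solve (hh : 0 < h) (T : ℝ) {ψ : ℝ → St n h} (hper : ∀ t, ψ (t + T) = ψ t)
    (hψ : ContDiff ℝ 1 ψ) :
    ∃ φ φθ : ℝ → St n h, InDomD0 n h hle T φ φθ ∧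
      (∀ t, z • φ t - (φθ t - deriv φ t) = ψ t) ∧
      (∀ t (θ : Set.Icc (-h) (0:ℝ)), φ t θ = PInt hle z ψ t ↑θ) := by
  have hψc : Continuous ψ := hψ.continuous
  have hψ'c : Continuous (deriv ψ) := hψ.continuous_deriv le_rfl
  refine ⟨phiMap hle z ψ hψ.continuous,
    fun t => z • phiMap hle z ψ hψ.continuous t
      + phiMap hle z (deriv ψ) (hψ.continuous_deriv le_rfl) t - ψ t, ⟨⟨?_, ?_, ?_⟩, ?_⟩, ?_, ?_⟩
  · exact fun t => phiMap_periodic hle z ψ hψ.continuous T hper t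
  · exact phiMap_contDiff hle z hh.le hψ
  · intro t θ
    have hder := phiMap_thetaDeriv hle z hh.le hψ t θ
    have hv : (z • phiMap hle z ψ hψ.continuous t
        + phiMap hle z (deriv ψ) (hψ.continuous_deriv le_rfl) t - ψ t) θ
        = z • PInt hle z ψ t ↑θ + PInt hle z (deriv ψ) t ↑θ - ψ t θ := by
      simp [ContinuousMap.add_apply, ContinuousMap.sub_apply, ContinuousMap.smul_apply,
        phiMap_apply]
    rw [hv]
    exact hder
  · intro t
    show PInt hle z ψ t ((0 : ℝ)) = 0
    exact PInt_zero hle z ψ t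
  · intro t
    have hd : deriv (phiMap hle z ψ hψ.continuous) t
        = phiMap hle z (deriv ψ) (hψ.continuous_deriv le_rfl) t :=
      phiMap_deriv hle z hh.le hψ t
    rw [hd]
    module
  · intro t θ
    rfl

lemma mollify (T : ℝ) (hT : 0 < T) {ψ : ℝ → St n h} (hper : ∀ t, ψ (t + T) = ψ t)
    (hψc : Continuous ψ) {ε : ℝ} (hε : 0 < ε) :
    ∃ ψ' : ℝ → St n h, (∀ t, ψ' (t + T) = ψ' t) ∧ ContDiff ℝ 1 ψ' ∧
      ∀ t, ‖ψ' t - ψ t‖ ≤ ε := by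
  obtain ⟨δ₁, hδ₁0, hδ₁⟩ := Metric.uniformContinuousOn_iff.mp
    ((isCompact_Icc (a := (0:ℝ)) (b := T + 1)).uniformContinuousOn_of_continuous
      hψc.continuousOn) ε hε
  set δ := min (δ₁ / 2) 1 with hδdef
  have hδ0 : 0 < δ := by positivity
  have hδδ₁ : δ < δ₁ := lt_of_le_of_lt (min_le_left _ _) (by linarith)
  have hδ1 : δ ≤ 1 := min_le_right _ _
  set g : ℝ → St n h := fun x => ∫ s in (0:ℝ)..x, ψ s with hg
  have hgd : ∀ x, HasDerivAt g (ψ x) x := fun x =>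
    intervalIntegral.integral_hasDerivAt_right (hψc.intervalIntegrable _ _)
      (hψc.stronglyMeasurableAtFilter _ _) hψc.continuousAt
  set ψδ : ℝ → St n h := fun t => (δ⁻¹ : ℝ) • ∫ s in t..(t + δ), ψ s with hψδ
  have hrepr : ψδ = fun t => (δ⁻¹ : ℝ) • (g (t + δ) - g t) := by
    funext t
    rw [hψδ, hg]
    simp only
    congr 1
    rw [intervalIntegral.integral_interval_sub_left (hψc.intervalIntegrable _ _)
      (hψc.intervalIntegrable _ _)]
  have hder : ∀ t, HasDerivAt ψδ ((δ⁻¹ : ℝ) • (ψ (t + δ) - ψ t)) t := by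
    intro t
    rw [hrepr]
    exact ((HasDerivAt.comp_add_const t δ (hgd (t + δ))).sub (hgd t)).const_smul (δ⁻¹ : ℝ)
  have hcont' : Continuous fun t => (δ⁻¹ : ℝ) • (ψ (t + δ) - ψ t) := by
    have h1 : Continuous fun t : ℝ => ψ (t + δ) := hψc.comp (by fun_prop)
    exact (h1.sub hψc).const_smul (δ⁻¹ : ℝ)
  have hcd : ContDiff ℝ 1 ψδ := by
    rw [contDiff_one_iff_deriv]
    refine ⟨fun t => (hder t).differentiableAt, ?_⟩
    have hh2 : deriv ψδ = fun t => (δ⁻¹ : ℝ) • (ψ (t + δ) - ψ t) :=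
      funext fun t => (hder t).deriv
    rw [hh2]
    exact hcont'
  have hperδ : ∀ t, ψδ (t + T) = ψδ t := by
    intro t
    rw [hψδ]
    simp only
    have h2 := intervalIntegral.integral_comp_add_right (a := t) (b := t + δ)
      (fun s => ψ s) T
    have h1 : (∫ s in (t + T)..(t + T + δ), ψ s) = ∫ s in t..(t + δ), ψ s := by
      rw [show t + T + δ = t + δ + T by ring, ← h2]
      apply intervalIntegral.integral_congr
      intro s _
      exact hper s
    rw [h1]
  have key : ∀ t₀ ∈ Set.Icc (0:ℝ) T, ‖ψδ t₀ - ψ t₀‖ ≤ ε := by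
    intro t₀ ht₀
    have hconst : (∫ _ in t₀..(t₀ + δ), ψ t₀) = δ • ψ t₀ := by
      rw [intervalIntegral.integral_const]
      congr 1
      ring
    have hsub : ψδ t₀ - ψ t₀ = (δ⁻¹ : ℝ) • ∫ s in t₀..(t₀ + δ), (ψ s - ψ t₀) := by
      rw [hψδ]
      simp only
      rw [intervalIntegral.integral_sub (hψc.intervalIntegrable _ _)
        intervalIntegrable_const]
      rw [smul_sub, hconst, smul_smul, inv_mul_cancel₀ (ne_of_gt hδ0), one_smul]
    have hbd : ‖∫ s in t₀..(t₀ + δ), (ψ s - ψ t₀)‖ ≤ ε * |t₀ + δ - t₀| := by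
      apply intervalIntegral.norm_integral_le_of_norm_le_const
      intro s hs
      rw [Set.uIoc_of_le (by linarith)] at hs
      have hs1 : t₀ < s := hs.1
      have hs2 : s ≤ t₀ + δ := hs.2
      have hmem1 : s ∈ Set.Icc (0:ℝ) (T + 1) :=
        ⟨by linarith [ht₀.1], by linarith [ht₀.2]⟩
      have hmem2 : t₀ ∈ Set.Icc (0:ℝ) (T + 1) := ⟨ht₀.1, by linarith [ht₀.2]⟩
      have hdist : dist s t₀ < δ₁ := by
        rw [Real.dist_eq, abs_of_pos (by linarith)]
        linarith
      have := hδ₁ s hmem1 t₀ hmem2 hdist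
      rw [dist_eq_norm] at this
      exact le_of_lt this
    rw [hsub]
    have hn : ‖(δ⁻¹ : ℝ) • ∫ s in t₀..(t₀ + δ), (ψ s - ψ t₀)‖
        = δ⁻¹ * ‖∫ s in t₀..(t₀ + δ), (ψ s - ψ t₀)‖ := by
      have := norm_smul (δ⁻¹ : ℝ) (∫ s in t₀..(t₀ + δ), (ψ s - ψ t₀))
      rw [Real.norm_eq_abs, abs_inv, abs_of_pos hδ0] at this
      exact this
    rw [hn]
    calc δ⁻¹ * ‖∫ s in t₀..(t₀ + δ), (ψ s - ψ t₀)‖ ≤ δ⁻¹ * (ε * |t₀ + δ - t₀|) :=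
          mul_le_mul_of_nonneg_left hbd (by positivity)
      _ = δ⁻¹ * (ε * δ) := by rw [show t₀ + δ - t₀ = δ by ring, abs_of_pos hδ0]
      _ = ε := by field_simp
  refine ⟨ψδ, hperδ, hcd, ?_⟩
  intro t
  have hperiodic : Function.Periodic (fun t => ‖ψδ t - ψ t‖) T := by
    intro x
    simp only
    rw [hperδ x, hper x]
  obtain ⟨y, hy, hxy⟩ := hperiodic.exists_mem_Ico₀ hT t
  calc ‖ψδ t - ψ t‖ = ‖ψδ y - ψ y‖ := hxy
    _ ≤ ε := key y ⟨hy.1, le_of_lt hy.2⟩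

end Aux

theorem statement17 (n : ℕ) (h T : ℝ) (hh : 0 < h) (hT : 0 < T) (z : ℂ) :
    -- `zI - D₀` is injective
    (∀ φ φθ : ℝ → St n h, InDomD0 n h (neg_nonpos.mpr hh.le) T φ φθ →
      (∀ t, z • φ t - (φθ t - deriv φ t) = 0) → φ = 0) ∧
    -- the range of `zI - D₀` contains `C_T¹(ℝ,X)`, with the solution given by the
    -- explicit integral formula for the algebraic inverse `R(z,D₀)`
    (∀ ψ : ℝ → St n h, (∀ t, ψ (t + T) = ψ t) → ContDiff ℝ 1 ψ →
      ∃ φ φθ : ℝ → St n h, InDomD0 n h (neg_nonpos.mpr hh.le) T φ φθ ∧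
        (∀ t, z • φ t - (φθ t - deriv φ t) = ψ t) ∧
        (∀ (t : ℝ) (θ : Set.Icc (-h) (0 : ℝ)),
          φ t θ = ∫ s in (θ : ℝ)..(0 : ℝ),
            Complex.exp (z * (((θ : ℝ) - s : ℝ) : ℂ)) •
              Set.IccExtend (neg_nonpos.mpr hh.le) (⇑(ψ (t + θ - s))) s)) ∧
    -- the algebraic inverse is bounded: `‖R(z,D₀)ψ‖_∞ ≤ M_z ‖ψ‖_∞`
    (∀ ψ φ φθ : ℝ → St n h, InDomD0 n h (neg_nonpos.mpr hh.le) T φ φθ →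
      (∀ t, z • φ t - (φθ t - deriv φ t) = ψ t) →
      ∀ C : ℝ, (∀ s, ‖ψ s‖ ≤ C) → ∀ t, ‖φ t‖ ≤ Mz h z * C) ∧
    -- `zI - D₀` has dense range in `C_T(ℝ,X)`; hence `ρ(D₀) = ℂ`
    (∀ ψ : ℝ → St n h, (∀ t, ψ (t + T) = ψ t) → Continuous ψ → ∀ ε > (0 : ℝ),
      ∃ φ φθ : ℝ → St n h, InDomD0 n h (neg_nonpos.mpr hh.le) T φ φθ ∧
        ∀ t, ‖z • φ t - (φθ t - deriv φ t) - ψ t‖ ≤ ε) := by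
  refine ⟨?_, ?_, ?_, ?_⟩
  · -- injectivity
    intro φ φθ hdom heqz
    have hC : ∀ u : ℝ, ‖(fun _ : ℝ => (0 : St n h)) u‖ ≤ (0:ℝ) := fun u => by simp
    have heq0 : ∀ u, z • φ u - (φθ u - deriv φ u) = (fun _ : ℝ => (0 : St n h)) u := heqz
    have hb := char_bound (neg_nonpos.mpr hh.le) z hh hdom heq0 hC
    funext t
    have hb' := hb t
    rw [mul_zero] at hb'
    exact norm_le_zero_iff.mp hb'
  · -- range contains C_T^1 with explicit formula
    intro ψ hper hψ
    obtain ⟨φ, φθ, hdom, heq, hform⟩ := solve (neg_nonpos.mpr hh.le) z hh T hper hψ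
    exact ⟨φ, φθ, hdom, heq, fun t θ => by
      rw [hform t θ, PInt_def]⟩
  · -- boundedness of the algebraic inverse
    intro ψ φ φθ hdom heq C hC t
    exact char_bound (neg_nonpos.mpr hh.le) z hh hdom heq hC t
  · -- dense range
    intro ψ hper hψc ε hε
    obtain ⟨ψ', hper', hcd', herr⟩ := mollify T hT hper hψc hε
    obtain ⟨φ, φθ, hdom, heq, _⟩ := solve (neg_nonpos.mpr hh.le) z hh T hper' hcd'
    refine ⟨φ, φθ, hdom, fun t => ?_⟩
    rw [heq t]
    exact herr t

end DDE
end

section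
/- Let S(z) : C_T¹(ℝ,ℂⁿ) ⊆ C_T(ℝ,ℂⁿ) → C_T(ℝ,ℂⁿ) be defined by (S(z)q)(t) = z q(t) − q̇(t). Then for every z ∈ ℂ \ (2πi/T)ℤ, S(z) is invertible with inverse (S(z)⁻¹q)(t) = (e^{zT} − 1)⁻¹ (∫₀ᵗ e^{z(t−s)} q(s) ds + ∫ₜ^T e^{z(t+T−s)} q(s) ds), and for real z ≠ 0 one has ‖S(z)⁻¹‖ ≤ 1/|z|. Moreover S(z)⁻¹ is a compact operator on C_T(ℝ,ℂⁿ). -/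
open scoped Topology
open Filter intervalIntegral

namespace DDE

/-- The explicit inverse of the operator `(S(z)q)(t) = z q(t) - q̇(t)` on `C_T(ℝ,ℂⁿ)`:
`(S(z)⁻¹q)(t) = (e^{zT} - 1)⁻¹ (∫₀ᵗ e^{z(t-s)} q(s) ds + ∫ₜ^T e^{z(t+T-s)} q(s) ds)`. -/
noncomputable def Sinv (n : ℕ) (T : ℝ) (z : ℂ) (q : ℝ → Fin n → ℂ) : ℝ → Fin n → ℂ :=
  fun t => (Complex.exp (z * (T : ℂ)) - 1)⁻¹ •
    ((∫ s in (0 : ℝ)..t, Complex.exp (z * ((t - s : ℝ) : ℂ)) • q s) +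
      ∫ s in t..T, Complex.exp (z * ((t + T - s : ℝ) : ℂ)) • q s)

/-- `F t = ∫₀ᵗ e^{-zs} q s ds`. -/
noncomputable def Fint (n : ℕ) (z : ℂ) (q : ℝ → Fin n → ℂ) (t : ℝ) : Fin n → ℂ :=
  ∫ s in (0:ℝ)..t, Complex.exp (-(z * (s : ℂ))) • q s

/-- `A = (e^{zT}-1)⁻¹ e^{zT} F T`. -/
noncomputable def SA (n : ℕ) (T : ℝ) (z : ℂ) (q : ℝ → Fin n → ℂ) : Fin n → ℂ :=
  ((Complex.exp (z * (T : ℂ)) - 1)⁻¹ * Complex.exp (z * (T : ℂ))) • Fint n z q T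

lemma cont_integrand_s18 {n : ℕ} {z : ℂ} {q : ℝ → Fin n → ℂ} (hq : Continuous q) :
    Continuous (fun s : ℝ => Complex.exp (-(z * (s : ℂ))) • q s) := by
  exact (Complex.continuous_exp.comp (by continuity)).smul hq

lemma Fint_hasDerivAt {n : ℕ} {z : ℂ} {q : ℝ → Fin n → ℂ} (hq : Continuous q) (t : ℝ) :
    HasDerivAt (Fint n z q) (Complex.exp (-(z * (t : ℂ))) • q t) t := by
  exact intervalIntegral.integral_hasDerivAt_right
    ((cont_integrand_s18 hq).intervalIntegrable 0 t)
    ((cont_integrand_s18 hq).stronglyMeasurableAtFilter _ _)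
    (cont_integrand_s18 hq).continuousAt

lemma Fint_continuous {n : ℕ} {z : ℂ} {q : ℝ → Fin n → ℂ} (hq : Continuous q) :
    Continuous (Fint n z q) := by
  rw [continuous_iff_continuousAt]
  exact fun x => ((Fint_hasDerivAt (z := z) hq x).differentiableAt).continuousAt

lemma Sinv_eq {n : ℕ} {T : ℝ} {z : ℂ} {q : ℝ → Fin n → ℂ} (hq : Continuous q)
    (he : Complex.exp (z * (T : ℂ)) ≠ 1) (t : ℝ) :
    Sinv n T z q t = Complex.exp (z * (t : ℂ)) • (SA n T z q - Fint n z q t) := by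
  have hb : Complex.exp (z * (T : ℂ)) - 1 ≠ 0 := sub_ne_zero.mpr he
  have hc : (Complex.exp (z * (T : ℂ)) - 1)⁻¹ * (Complex.exp (z * (T : ℂ)) - 1) = 1 :=
    inv_mul_cancel₀ hb
  have h1 : (∫ s in (0 : ℝ)..t, Complex.exp (z * ((t - s : ℝ) : ℂ)) • q s)
      = Complex.exp (z * (t:ℂ)) • Fint n z q t := by
    rw [Fint, ← intervalIntegral.integral_smul]
    congr 1; ext s
    rw [smul_smul, ← Complex.exp_add]
    push_cast
    ring_nf
  have h2 : (∫ s in t..T, Complex.exp (z * ((t + T - s : ℝ) : ℂ)) • q s)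
      = (Complex.exp (z * (t:ℂ)) * Complex.exp (z * (T:ℂ))) • (Fint n z q T - Fint n z q t) := by
    have hsub : Fint n z q T - Fint n z q t
        = ∫ s in t..T, Complex.exp (-(z * (s : ℂ))) • q s :=
      intervalIntegral.integral_interval_sub_left
        ((cont_integrand_s18 hq).intervalIntegrable 0 T)
        ((cont_integrand_s18 hq).intervalIntegrable 0 t)
    rw [hsub, ← intervalIntegral.integral_smul]
    congr 1; ext s
    rw [smul_smul, ← Complex.exp_add, ← Complex.exp_add]
    push_cast
    ring_nf
  rw [Sinv, h1, h2, SA]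
  match_scalars <;> · field_simp; try ring

/-- derivative of `t ↦ exp (w * t)` -/
lemma exp_mul_hasDerivAt (w : ℂ) (t : ℝ) :
    HasDerivAt (fun s : ℝ => Complex.exp (w * (s : ℂ))) (Complex.exp (w * (t : ℂ)) * w) t := by
  have h : HasDerivAt (fun u : ℂ => Complex.exp (w * u)) (Complex.exp (w * (t:ℂ)) * w) (t : ℂ) :=
    ((hasDerivAt_id ((t : ℝ) : ℂ)).const_mul w).cexp.congr_deriv (by simp)
  exact h.comp_ofReal

lemma exp_mul_exp_neg (w : ℂ) : Complex.exp w * Complex.exp (-w) = 1 := by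
  rw [← Complex.exp_add, add_neg_cancel, Complex.exp_zero]

lemma Sinv_hasDerivAt {n : ℕ} {T : ℝ} {z : ℂ} {q : ℝ → Fin n → ℂ} (hq : Continuous q)
    (he : Complex.exp (z * (T : ℂ)) ≠ 1) (t : ℝ) :
    HasDerivAt (Sinv n T z q) (z • Sinv n T z q t - q t) t := by
  have hrw : Sinv n T z q = fun s : ℝ => Complex.exp (z * (s : ℂ)) • (SA n T z q - Fint n z q s) :=
    funext fun s => Sinv_eq hq he s
  rw [hrw]
  have h1 := exp_mul_hasDerivAt z t
  have h2 : HasDerivAt (fun s => SA n T z q - Fint n z q s)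
      (-(Complex.exp (-(z * (t:ℂ))) • q t)) t := (Fint_hasDerivAt hq t).const_sub _
  have h3 := h1.smul h2
  refine h3.congr_deriv ?_
  rw [← hrw]
  rw [Sinv_eq hq he t]
  have hab : Complex.exp (z * (t:ℂ)) * Complex.exp (-(z * (t:ℂ))) = 1 := exp_mul_exp_neg _
  match_scalars
  all_goals try ring
  all_goals linear_combination - hab

lemma Sinv_contDiff {n : ℕ} {T : ℝ} {z : ℂ} {q : ℝ → Fin n → ℂ} (hq : Continuous q)
    (he : Complex.exp (z * (T : ℂ)) ≠ 1) : ContDiff ℝ 1 (Sinv n T z q) := by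
  have hdiff : Differentiable ℝ (Sinv n T z q) :=
    fun t => (Sinv_hasDerivAt hq he t).differentiableAt
  rw [contDiff_one_iff_deriv]
  refine ⟨hdiff, ?_⟩
  have hderiv : deriv (Sinv n T z q) = fun t => z • Sinv n T z q t - q t :=
    funext fun t => (Sinv_hasDerivAt hq he t).deriv
  rw [hderiv]
  exact ((hdiff.continuous).const_smul z).sub hq

lemma Sinv_spec {n : ℕ} {T : ℝ} {z : ℂ} {q : ℝ → Fin n → ℂ} (hq : Continuous q)
    (he : Complex.exp (z * (T : ℂ)) ≠ 1) (t : ℝ) :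
    z • Sinv n T z q t - deriv (Sinv n T z q) t = q t := by
  rw [(Sinv_hasDerivAt hq he t).deriv]; abel

lemma Fint_add_T {n : ℕ} {T : ℝ} {z : ℂ} {q : ℝ → Fin n → ℂ}
    (hqper : ∀ t, q (t + T) = q t) (hq : Continuous q) (t : ℝ) :
    Fint n z q (t + T) = Fint n z q T + Complex.exp (-(z * (T:ℂ))) • Fint n z q t := by
  have hsub : Fint n z q (t + T) - Fint n z q T
      = ∫ s in T..(t+T), Complex.exp (-(z * (s : ℂ))) • q s :=
    intervalIntegral.integral_interval_sub_left
      ((cont_integrand_s18 hq).intervalIntegrable 0 (t+T))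
      ((cont_integrand_s18 hq).intervalIntegrable 0 T)
  have hshift : (∫ s in T..(t+T), Complex.exp (-(z * (s : ℂ))) • q s)
      = ∫ s in (0:ℝ)..t, Complex.exp (-(z * ((s + T : ℝ) : ℂ))) • q (s + T) := by
    rw [intervalIntegral.integral_comp_add_right
      (fun s => Complex.exp (-(z * (s : ℂ))) • q s) T, zero_add]
  have hval : (∫ s in (0:ℝ)..t, Complex.exp (-(z * ((s + T : ℝ) : ℂ))) • q (s + T))
      = Complex.exp (-(z * (T:ℂ))) • Fint n z q t := by
    rw [Fint, ← intervalIntegral.integral_smul]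
    congr 1; ext s
    rw [hqper s, smul_smul, ← Complex.exp_add]
    push_cast
    ring_nf
  have := hsub.trans (hshift.trans hval)
  linear_combination (norm := module) this

lemma Sinv_periodic {n : ℕ} {T : ℝ} {z : ℂ} {q : ℝ → Fin n → ℂ}
    (hqper : ∀ t, q (t + T) = q t) (hq : Continuous q)
    (he : Complex.exp (z * (T : ℂ)) ≠ 1) (t : ℝ) :
    Sinv n T z q (t + T) = Sinv n T z q t := by
  have hb : Complex.exp (z * (T : ℂ)) - 1 ≠ 0 := sub_ne_zero.mpr he
  have hc : (Complex.exp (z * (T : ℂ)) - 1)⁻¹ * (Complex.exp (z * (T : ℂ)) - 1) = 1 :=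
    inv_mul_cancel₀ hb
  rw [Sinv_eq hq he, Sinv_eq hq he, Fint_add_T hqper hq, SA]
  have hext : Complex.exp (z * ((t + T : ℝ) : ℂ)) = Complex.exp (z * (t:ℂ)) * Complex.exp (z * (T:ℂ)) := by
    rw [← Complex.exp_add]; push_cast; ring_nf
  rw [hext]
  have hab : Complex.exp (z * (T:ℂ)) * Complex.exp (-(z * (T:ℂ))) = 1 := exp_mul_exp_neg _
  match_scalars
  · linear_combination (Complex.exp (z * (t:ℂ)) * Complex.exp (z * (T:ℂ))) * hc
  · linear_combination (-Complex.exp (z * (t:ℂ))) * hab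

lemma Sinv_unique {n : ℕ} {T : ℝ} {z : ℂ} {q p : ℝ → Fin n → ℂ}
    (hq : Continuous q) (he : Complex.exp (z * (T : ℂ)) ≠ 1)
    (hpper : ∀ t, p (t + T) = p t) (hp1 : ContDiff ℝ 1 p)
    (hpeq : ∀ t, z • p t - deriv p t = q t) : p = Sinv n T z q := by
  have hb : Complex.exp (z * (T : ℂ)) - 1 ≠ 0 := sub_ne_zero.mpr he
  have hpd : Differentiable ℝ p := hp1.differentiable one_ne_zero
  set g : ℝ → Fin n → ℂ := fun t => Complex.exp (-(z * (t:ℂ))) • p t with hg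
  have hgd : ∀ t : ℝ, HasDerivAt g (-(Complex.exp (-(z * (t:ℂ))) • q t)) t := by
    intro t
    have h1 : HasDerivAt (fun s : ℝ => Complex.exp (-(z * (s:ℂ))))
        (Complex.exp (-(z * (t:ℂ))) * (-z)) t := by
      have := exp_mul_hasDerivAt (-z) t
      simpa [neg_mul] using this
    have h2 : HasDerivAt p (deriv p t) t := (hpd t).hasDerivAt
    have h3 := h1.smul h2
    refine h3.congr_deriv ?_
    have := hpeq t
    have hq' : q t = z • p t - deriv p t := (hpeq t).symm
    rw [hq']
    match_scalars <;> ring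
  -- `g t = g 0 - Fint t`
  have hkey : ∀ t, g t = p 0 - Fint n z q t := by
    intro t
    have hint : (∫ s in (0:ℝ)..t, -(Complex.exp (-(z * (s:ℂ))) • q s)) = g t - g 0 :=
      intervalIntegral.integral_eq_sub_of_hasDerivAt (fun s _ => hgd s)
        (((cont_integrand_s18 hq).neg).intervalIntegrable 0 t)
    have hneg : (∫ s in (0:ℝ)..t, -(Complex.exp (-(z * (s:ℂ))) • q s)) = -Fint n z q t := by
      rw [Fint, intervalIntegral.integral_neg]
    have hg0 : g 0 = p 0 := by simp [hg]
    rw [hneg, hg0] at hint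
    linear_combination (norm := module) -hint
  have hform : ∀ t, p t = Complex.exp (z * (t:ℂ)) • (p 0 - Fint n z q t) := by
    intro t
    rw [← hkey t, hg]
    rw [smul_smul, exp_mul_exp_neg, one_smul]
  have hp0 : p 0 = SA n T z q := by
    have hTp : p T = p 0 := by simpa using hpper 0
    have h1 : Complex.exp (z * (T:ℂ)) • (p 0 - Fint n z q T) = p 0 := by
      rw [← hform T, hTp]
    rw [SA]
    have hc : (Complex.exp (z * (T : ℂ)) - 1)⁻¹ * (Complex.exp (z * (T : ℂ)) - 1) = 1 :=
      inv_mul_cancel₀ hb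
    have h2 : (Complex.exp (z * (T:ℂ)) - 1) • p 0 = Complex.exp (z * (T:ℂ)) • Fint n z q T := by
      linear_combination (norm := module) h1
    calc p 0 = ((Complex.exp (z * (T : ℂ)) - 1)⁻¹ * (Complex.exp (z * (T : ℂ)) - 1)) • p 0 := by
          rw [hc, one_smul]
      _ = (Complex.exp (z * (T : ℂ)) - 1)⁻¹ • ((Complex.exp (z * (T:ℂ)) - 1) • p 0) := by
          rw [smul_smul]
      _ = (Complex.exp (z * (T : ℂ)) - 1)⁻¹ • (Complex.exp (z * (T:ℂ)) • Fint n z q T) := by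
          rw [h2]
      _ = ((Complex.exp (z * (T : ℂ)) - 1)⁻¹ * Complex.exp (z * (T:ℂ))) • Fint n z q T := by
          rw [smul_smul]
  funext t
  rw [Sinv_eq hq he t, hform t, hp0]

lemma integral_exp_mul_real (x : ℝ) (hx : x ≠ 0) (a b : ℝ) :
    ∫ s in a..b, Real.exp (x * s) = (Real.exp (x * b) - Real.exp (x * a)) / x := by
  have hder : ∀ s : ℝ, HasDerivAt (fun u => Real.exp (x * u) / x) (Real.exp (x * s)) s := by
    intro s
    have h1 : HasDerivAt (fun u : ℝ => Real.exp (x * u)) (Real.exp (x * s) * x) s :=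
      (((hasDerivAt_id s).const_mul x).exp).congr_deriv (by simp)
    have := h1.div_const x
    refine this.congr_deriv ?_
    field_simp
  rw [intervalIntegral.integral_eq_sub_of_hasDerivAt (fun s _ => hder s)
    ((Real.continuous_exp.comp (continuous_const.mul continuous_id)).intervalIntegrable a b)]
  ring

lemma real_exp_ne_one {x T : ℝ} (hx : x ≠ 0) (hT : 0 < T) :
    Complex.exp ((x : ℂ) * (T : ℂ)) ≠ 1 := by
  have : ((x : ℂ) * (T : ℂ)) = ((x * T : ℝ) : ℂ) := by push_cast; ring
  rw [this, ← Complex.ofReal_exp]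
  intro h
  have : Real.exp (x * T) = 1 := by exact_mod_cast h
  rw [Real.exp_eq_one_iff] at this
  exact hx (by rcases mul_eq_zero.mp this with h | h; exact h; exact absurd h hT.ne')

lemma Sinv_norm_bound_Icc {n : ℕ} {T : ℝ} (hT : 0 < T) {x : ℝ} (hx : x ≠ 0)
    {q : ℝ → Fin n → ℂ} (hq : Continuous q) {C : ℝ} (hC : ∀ t, ‖q t‖ ≤ C)
    {t : ℝ} (ht0 : 0 ≤ t) (htT : t ≤ T) :
    ‖Sinv n T (x : ℂ) q t‖ ≤ C / |x| := by
  have hC0 : 0 ≤ C := le_trans (norm_nonneg _) (hC 0)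
  set b : ℝ := Real.exp (x * T) with hbdef
  have hb1 : b ≠ 1 := by
    rw [hbdef]; intro h; rw [Real.exp_eq_one_iff] at h
    exact hx (by rcases mul_eq_zero.mp h with h | h; exact h; exact absurd h hT.ne')
  -- norm of the scalar
  have hnormc : ‖(Complex.exp ((x:ℂ) * (T : ℂ)) - 1)⁻¹‖ = |b - 1|⁻¹ := by
    have : (Complex.exp ((x:ℂ) * (T : ℂ)) - 1) = ((b - 1 : ℝ) : ℂ) := by
      rw [hbdef]; push_cast [← Complex.ofReal_exp]; norm_num
    rw [this, norm_inv, Complex.norm_real, Real.norm_eq_abs]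
  -- pointwise bound of the integrands
  have hpt : ∀ (u : ℝ) (s : ℝ), ‖Complex.exp ((x:ℂ) * ((u : ℝ) : ℂ)) • q s‖
      ≤ Real.exp (x * u) * C := by
    intro u s
    rw [norm_smul]
    have h1 : ‖Complex.exp ((x:ℂ) * ((u : ℝ) : ℂ))‖ = Real.exp (x * u) := by
      have : ((x:ℂ) * ((u : ℝ) : ℂ)) = ((x * u : ℝ) : ℂ) := by push_cast; ring
      rw [this, ← Complex.ofReal_exp, Complex.norm_real, Real.norm_eq_abs,
        abs_of_pos (Real.exp_pos _)]
    rw [h1]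
    exact mul_le_mul_of_nonneg_left (hC s) (Real.exp_pos _).le
  -- first integral
  have hI1 : ‖∫ s in (0:ℝ)..t, Complex.exp ((x:ℂ) * ((t - s : ℝ) : ℂ)) • q s‖
      ≤ C * (Real.exp (x * t) - 1) / x := by
    calc ‖∫ s in (0:ℝ)..t, Complex.exp ((x:ℂ) * ((t - s : ℝ) : ℂ)) • q s‖
        ≤ ∫ s in (0:ℝ)..t, ‖Complex.exp ((x:ℂ) * ((t - s : ℝ) : ℂ)) • q s‖ :=
          intervalIntegral.norm_integral_le_integral_norm ht0
      _ ≤ ∫ s in (0:ℝ)..t, Real.exp (x * (t - s)) * C := by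
          apply intervalIntegral.integral_mono_on ht0
          · exact (((Complex.continuous_exp.comp (by continuity)).smul hq).norm).intervalIntegrable 0 t
          · exact ((Real.continuous_exp.comp (by continuity)).mul continuous_const).intervalIntegrable 0 t
          · exact fun s _ => hpt (t - s) s
      _ = C * (Real.exp (x * t) - 1) / x := by
          rw [intervalIntegral.integral_mul_const,
            intervalIntegral.integral_comp_sub_left (fun u => Real.exp (x * u)) t]
          simp only [sub_self, sub_zero]
          rw [integral_exp_mul_real x hx]
          rw [mul_zero, Real.exp_zero]
          ring
  -- second integral
  have hI2 : ‖∫ s in t..T, Complex.exp ((x:ℂ) * ((t + T - s : ℝ) : ℂ)) • q s‖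
      ≤ C * (Real.exp (x * T) - Real.exp (x * t)) / x := by
    calc ‖∫ s in t..T, Complex.exp ((x:ℂ) * ((t + T - s : ℝ) : ℂ)) • q s‖
        ≤ ∫ s in t..T, ‖Complex.exp ((x:ℂ) * ((t + T - s : ℝ) : ℂ)) • q s‖ :=
          intervalIntegral.norm_integral_le_integral_norm htT
      _ ≤ ∫ s in t..T, Real.exp (x * (t + T - s)) * C := by
          apply intervalIntegral.integral_mono_on htT
          · exact (((Complex.continuous_exp.comp (by continuity)).smul hq).norm).intervalIntegrable t T
          · exact ((Real.continuous_exp.comp (by continuity)).mul continuous_const).intervalIntegrable t T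
          · exact fun s _ => hpt (t + T - s) s
      _ = C * (Real.exp (x * T) - Real.exp (x * t)) / x := by
          rw [intervalIntegral.integral_mul_const,
            intervalIntegral.integral_comp_sub_left (fun u => Real.exp (x * u)) (t + T)]
          have h1 : t + T - T = t := by ring
          have h2 : t + T - t = T := by ring
          rw [h1, h2, integral_exp_mul_real x hx]
          ring
  -- put everything together
  have hsum : ‖Sinv n T (x : ℂ) q t‖
      ≤ |b - 1|⁻¹ * (C * (Real.exp (x * t) - 1) / x + C * (Real.exp (x * T) - Real.exp (x * t)) / x) := by
    rw [Sinv, norm_smul, hnormc]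
    refine mul_le_mul_of_nonneg_left ?_ (by positivity)
    exact le_trans (norm_add_le _ _) (add_le_add hI1 hI2)
  have hkey : C * (Real.exp (x * t) - 1) / x + C * (Real.exp (x * T) - Real.exp (x * t)) / x
      = C * (b - 1) / x := by rw [hbdef]; ring
  rw [hkey] at hsum
  refine le_trans hsum (le_of_eq ?_)
  have hpos : 0 < (b - 1) / x := by
    rcases lt_or_gt_of_ne hx with hneg | hpos
    · have : b < 1 := by
        rw [hbdef, ← Real.exp_zero]
        exact Real.exp_lt_exp.mpr (by nlinarith)
      exact div_pos_of_neg_of_neg (by linarith) hneg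
    · have : 1 < b := by
        rw [hbdef, ← Real.exp_zero]
        exact Real.exp_lt_exp.mpr (by positivity)
      exact div_pos (by linarith) hpos
  have habs : (b - 1) / x = |b - 1| / |x| := by
    rw [← abs_div, abs_of_pos hpos]
  have hbne : |b - 1| ≠ 0 := by
    simp only [ne_eq, abs_eq_zero, sub_eq_zero]; exact hb1
  rw [mul_div_assoc, habs]
  field_simp

lemma Sinv_norm_bound_M {n : ℕ} {T : ℝ} (hT : 0 < T) {z : ℂ}
    (he : Complex.exp (z * (T : ℂ)) ≠ 1)
    {q : ℝ → Fin n → ℂ} (hqper : ∀ t, q (t + T) = q t) (hq : Continuous q)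
    {C : ℝ} (hC : ∀ t, ‖q t‖ ≤ C) (t : ℝ) :
    ‖Sinv n T z q t‖ ≤ ‖(Complex.exp (z * (T : ℂ)) - 1)⁻¹‖ *
      (2 * (Real.exp (|z.re| * (2 * T)) * C * T)) := by
  have hC0 : 0 ≤ C := le_trans (norm_nonneg _) (hC 0)
  have hper : Function.Periodic (Sinv n T z q) T := fun s => Sinv_periodic hqper hq he s
  obtain ⟨u, hu, hueq⟩ := hper.exists_mem_Ico₀ hT t
  rw [hueq]
  obtain ⟨hu0, huT⟩ := hu
  set K : ℝ := Real.exp (|z.re| * (2 * T)) * C with hK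
  have hK0 : 0 ≤ K := by positivity
  have hpt : ∀ (v s : ℝ), |v| ≤ 2 * T → ‖Complex.exp (z * ((v : ℝ) : ℂ)) • q s‖ ≤ K := by
    intro v s hv
    rw [norm_smul, Complex.norm_exp]
    have h1 : (z * (v : ℂ)).re = z.re * v := by simp [Complex.mul_re]
    rw [h1, hK]
    have h2 : z.re * v ≤ |z.re| * (2 * T) := by
      calc z.re * v ≤ |z.re * v| := le_abs_self _
        _ = |z.re| * |v| := abs_mul _ _
        _ ≤ |z.re| * (2 * T) := mul_le_mul_of_nonneg_left hv (abs_nonneg _)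
    exact mul_le_mul (Real.exp_le_exp.mpr h2) (hC s) (norm_nonneg _) (Real.exp_pos _).le
  have hI1 : ‖∫ s in (0:ℝ)..u, Complex.exp (z * ((u - s : ℝ) : ℂ)) • q s‖ ≤ K * T := by
    have := intervalIntegral.norm_integral_le_of_norm_le_const
      (C := K) (f := fun s => Complex.exp (z * ((u - s : ℝ) : ℂ)) • q s) (a := 0) (b := u) ?_
    · refine le_trans this ?_
      rw [sub_zero]
      exact mul_le_mul_of_nonneg_left (by rw [abs_of_nonneg hu0]; linarith) hK0
    · intro s hs
      rw [Set.uIoc_of_le hu0] at hs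
      refine hpt (u - s) s ?_
      rw [abs_of_nonneg (by linarith [hs.2])]
      linarith [hs.1, hs.2]
  have hI2 : ‖∫ s in u..T, Complex.exp (z * ((u + T - s : ℝ) : ℂ)) • q s‖ ≤ K * T := by
    have := intervalIntegral.norm_integral_le_of_norm_le_const
      (C := K) (f := fun s => Complex.exp (z * ((u + T - s : ℝ) : ℂ)) • q s) (a := u) (b := T) ?_
    · refine le_trans this ?_
      exact mul_le_mul_of_nonneg_left (by rw [abs_of_nonneg (by linarith)]; linarith) hK0
    · intro s hs
      rw [Set.uIoc_of_le huT.le] at hs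
      refine hpt (u + T - s) s ?_
      rw [abs_of_nonneg (by linarith [hs.2])]
      linarith [hs.1, hs.2]
  rw [Sinv, norm_smul]
  refine mul_le_mul_of_nonneg_left ?_ (norm_nonneg _)
  calc ‖_ + _‖ ≤ K * T + K * T := le_trans (norm_add_le _ _) (add_le_add hI1 hI2)
    _ = 2 * (K * T) := by ring

lemma equicontinuous_of_lipschitzWith {ι X E : Type*} [PseudoMetricSpace X] [PseudoMetricSpace E]
    {K : NNReal} {F : ι → X → E} (h : ∀ i, LipschitzWith K (F i)) : Equicontinuous F := by
  intro x
  rw [Metric.equicontinuousAt_iff]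
  intro ε hε
  refine ⟨ε / (K + 1), by positivity, fun y hy i => ?_⟩
  calc dist (F i x) (F i y) ≤ K * dist x y := (h i).dist_le_mul x y
    _ ≤ (K + 1) * dist x y := by
        have : (0:ℝ) ≤ dist x y := dist_nonneg
        have hK : (K:ℝ) ≤ (K:ℝ) + 1 := by linarith
        exact mul_le_mul_of_nonneg_right hK this
    _ < (K + 1) * (ε / (K + 1)) := by
        refine mul_lt_mul_of_pos_left ?_ (by positivity)
        rw [dist_comm x y]; exact hy
    _ = ε := by field_simp

set_option maxHeartbeats 1000000 in
set_option synthInstance.maxHeartbeats 400000 in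
theorem statement18 (n : ℕ) (T : ℝ) (hT : 0 < T) (z : ℂ)
    (hz : ∀ k : ℤ, z ≠ 2 * Real.pi * Complex.I * (k : ℂ) / (T : ℂ)) :
    -- `S(z)` is invertible with the explicit inverse `Sinv`
    (∀ q : ℝ → Fin n → ℂ, (∀ t, q (t + T) = q t) → Continuous q →
      ((∀ t, Sinv n T z q (t + T) = Sinv n T z q t) ∧ ContDiff ℝ 1 (Sinv n T z q) ∧
        ∀ t, z • Sinv n T z q t - deriv (Sinv n T z q) t = q t) ∧
      (∀ p : ℝ → Fin n → ℂ, (∀ t, p (t + T) = p t) → ContDiff ℝ 1 p →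
        (∀ t, z • p t - deriv p t = q t) → p = Sinv n T z q)) ∧
    -- for real `z ≠ 0` one has `‖S(z)⁻¹‖ ≤ 1/|z|`
    (∀ x : ℝ, x ≠ 0 → ∀ q : ℝ → Fin n → ℂ, (∀ t, q (t + T) = q t) → Continuous q →
      ∀ C : ℝ, (∀ t, ‖q t‖ ≤ C) → ∀ t, ‖Sinv n T (x : ℂ) q t‖ ≤ C / |x|) ∧
    -- `S(z)⁻¹` is a compact operator on `C_T(ℝ,ℂⁿ)`: every bounded sequence of
    -- `T`-periodic continuous functions has a subsequence whose images converge uniformly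
    (∀ (qs : ℕ → ℝ → Fin n → ℂ) (C : ℝ),
      (∀ m, (∀ t, qs m (t + T) = qs m t) ∧ Continuous (qs m)) →
      (∀ m t, ‖qs m t‖ ≤ C) →
      ∃ ms : ℕ → ℕ, StrictMono ms ∧ ∃ plim : ℝ → Fin n → ℂ,
        TendstoUniformly (fun k => Sinv n T z (qs (ms k))) plim atTop) := by
  have hTne : (T : ℂ) ≠ 0 := by exact_mod_cast hT.ne'
  have he : Complex.exp (z * (T : ℂ)) ≠ 1 := by
    intro h
    rw [Complex.exp_eq_one_iff] at h
    obtain ⟨k, hk⟩ := h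
    apply hz k
    rw [eq_div_iff hTne]
    rw [hk]
    ring
  refine ⟨?_, ?_, ?_⟩
  · intro q hqper hq
    exact ⟨⟨fun t => Sinv_periodic hqper hq he t, Sinv_contDiff hq he,
        fun t => Sinv_spec hq he t⟩,
      fun p hpper hp1 hpeq => Sinv_unique hq he hpper hp1 hpeq⟩
  · intro x hx q hqper hq C hC t
    have hex : Complex.exp ((x:ℂ) * (T:ℂ)) ≠ 1 := real_exp_ne_one hx hT
    have hper : Function.Periodic (Sinv n T (x:ℂ) q) T := fun s => Sinv_periodic hqper hq hex s
    obtain ⟨u, hu, hueq⟩ := hper.exists_mem_Ico₀ hT t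
    rw [hueq]
    exact Sinv_norm_bound_Icc hT hx hq hC hu.1 hu.2.le
  · intro qs C hqs hqC
    have hC0 : 0 ≤ C := le_trans (norm_nonneg _) (hqC 0 0)
    set c : ℝ := ‖(Complex.exp (z * (T : ℂ)) - 1)⁻¹‖ with hcdef
    set M : ℝ := c * (2 * (Real.exp (|z.re| * (2*T)) * C * T)) with hM
    have hM0 : 0 ≤ M := by
      rw [hM, hcdef]; positivity
    set ps : ℕ → ℝ → Fin n → ℂ := fun m => Sinv n T z (qs m) with hps
    have hpbound : ∀ m t, ‖ps m t‖ ≤ M := fun m t =>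
      Sinv_norm_bound_M hT he (hqs m).1 (hqs m).2 (fun t => hqC m t) t
    have hpdiff : ∀ m, Differentiable ℝ (ps m) :=
      fun m t => (Sinv_hasDerivAt (hqs m).2 he t).differentiableAt
    have hperm : ∀ m, Function.Periodic (ps m) T :=
      fun m s => Sinv_periodic (hqs m).1 (hqs m).2 he s
    set L : NNReal := (‖z‖ * M + C).toNNReal with hL
    have hplip : ∀ m, LipschitzWith L (ps m) := by
      intro m
      apply lipschitzWith_of_nnnorm_deriv_le (hpdiff m)
      intro t
      have hd : deriv (ps m) t = z • ps m t - qs m t :=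
        (Sinv_hasDerivAt (hqs m).2 he t).deriv
      have hle : ‖deriv (ps m) t‖ ≤ ‖z‖ * M + C := by
        rw [hd]
        calc ‖z • ps m t - qs m t‖ ≤ ‖z • ps m t‖ + ‖qs m t‖ := norm_sub_le _ _
          _ ≤ ‖z‖ * M + C := add_le_add
              (by rw [norm_smul];
                  exact mul_le_mul_of_nonneg_left (hpbound m t) (norm_nonneg z))
              (hqC m t)
      rw [hL, ← norm_toNNReal]
      exact Real.toNNReal_mono hle
    haveI : CompactSpace (Set.Icc (0:ℝ) T) := isCompact_iff_compactSpace.mp isCompact_Icc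
    set g : ℕ → BoundedContinuousFunction (Set.Icc (0:ℝ) T) (Fin n → ℂ) :=
      fun m => BoundedContinuousFunction.mkOfCompact
        ⟨fun u => ps m u, ((hpdiff m).continuous).comp continuous_subtype_val⟩ with hg
    set A : Set (BoundedContinuousFunction (Set.Icc (0:ℝ) T) (Fin n → ℂ)) := Set.range g with hA
    have hcomp : IsCompact (closure A) := by
      apply BoundedContinuousFunction.arzela_ascoli (Metric.closedBall 0 M)
        (isCompact_closedBall _ _) A
      · rintro f u ⟨m, rfl⟩
        rw [Metric.mem_closedBall, dist_zero_right]
        exact hpbound m u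
      · apply equicontinuous_of_lipschitzWith (K := L)
        rintro ⟨f, m, rfl⟩
        have h1 : LipschitzWith (L * 1) ((ps m) ∘ (Subtype.val : Set.Icc (0:ℝ) T → ℝ)) :=
          (hplip m).comp (LipschitzWith.subtype_val _)
        rw [mul_one] at h1
        exact h1
    have hmem : ∀ m, g m ∈ closure A := fun m => subset_closure ⟨m, rfl⟩
    obtain ⟨gl, _, ms, hms, htend⟩ := hcomp.isSeqCompact hmem
    rw [BoundedContinuousFunction.tendsto_iff_tendstoUniformly] at htend
    have hproj : ∀ t : ℝ, Int.fract (t/T) * T ∈ Set.Icc (0:ℝ) T := by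
      intro t
      constructor
      · exact mul_nonneg (Int.fract_nonneg _) hT.le
      · nlinarith [Int.fract_nonneg (t/T), (Int.fract_lt_one (t/T)).le]
    set proj : ℝ → Set.Icc (0:ℝ) T := fun t => ⟨Int.fract (t/T) * T, hproj t⟩ with hprojdef
    have hps_proj : ∀ m (t : ℝ), ps m t = ps m ((proj t : ℝ)) := by
      intro m t
      have hval : ((proj t : ℝ)) = t - (⌊t/T⌋ : ℤ) * T := by
        show Int.fract (t/T) * T = _
        rw [Int.fract, sub_mul, div_mul_cancel₀ _ hT.ne']
      rw [hval]
      exact ((hperm m).sub_int_mul_eq _).symm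
    refine ⟨ms, hms, fun t => gl (proj t), ?_⟩
    rw [Metric.tendstoUniformly_iff]
    intro ε hε
    rw [Metric.tendstoUniformly_iff] at htend
    filter_upwards [htend ε hε] with k hk
    intro t
    have h1 : Sinv n T z (qs (ms k)) t = g (ms k) (proj t) := by
      show ps (ms k) t = _
      rw [hps_proj (ms k) t]
      rfl
    rw [h1]
    exact hk (proj t)


end DDE
end
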